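/- arXiv:2305.08679 — 5 statements merged into one kernel-verified Lean document; each statement's English description precedes it below -/
import Mathlib

section
/- For 1 < p < ∞ and every nonnegative integrable function f on (0,∞), the Hardy operator H f(x) = (1/x) ∫₀ˣ f(t) dt satisfies ‖H f‖_{L^p(0,∞)} ≤ (p/(p-1)) ‖f‖_{L^p(0,∞)}. -/
open MeasureTheory Set
open scoped ENNReal

/-! Hölder's inequality on `(0, x)` against the weight `t ^ (1/(pq))` gives
`(∫₀ˣ g) ^ p ≤ q ^ (p-1) x ^ ((p-1)/q) ∫₀ˣ g ^ p t ^ (1/q)`, the dual factor being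
`∫₀ˣ t ^ (-1/p) = q x ^ (1/q)`. Dividing by `x ^ p`, integrating in `x` and swapping the order of
integration, the inner integral `∫ₜ^∞ x ^ (1/p - 2) dx = q t ^ (-1/q)` cancels the weight exactly,
so `‖H g‖ₚ ^ p ≤ q ^ p ‖g‖ₚ ^ p` with `q = p/(p-1)`. A real `f` is handled through `|f|`. -/

theorem lintegral_Ioo_ofReal_rpow {r : ℝ} (hr : -1 < r) {x : ℝ} (hx : 0 ≤ x) :
    ∫⁻ t in Ioo 0 x, ENNReal.ofReal t ^ r =
      ENNReal.ofReal (r + 1)⁻¹ * ENNReal.ofReal x ^ (r + 1) := by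
  have hint : IntegrableOn (fun t : ℝ => t ^ r) (Ioo 0 x) :=
    (intervalIntegrable_iff_integrableOn_Ioo_of_le hx).mp
      (intervalIntegral.intervalIntegrable_rpow' hr)
  calc ∫⁻ t in Ioo 0 x, ENNReal.ofReal t ^ r = ∫⁻ t in Ioo 0 x, ENNReal.ofReal (t ^ r) :=
        setLIntegral_congr_fun measurableSet_Ioo fun t ht => ENNReal.ofReal_rpow_of_pos ht.1
    _ = ENNReal.ofReal (∫ t in (0)..x, t ^ r) := by
        rw [intervalIntegral.integral_of_le hx, integral_Ioc_eq_integral_Ioo,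
          ofReal_integral_eq_lintegral_ofReal hint]
        filter_upwards [ae_restrict_mem measurableSet_Ioo] with t ht
        exact Real.rpow_nonneg ht.1.le r
    _ = _ := by
        rw [integral_rpow (Or.inl hr), Real.zero_rpow (by linarith), sub_zero, div_eq_inv_mul,
          ENNReal.ofReal_mul (by simp only [inv_nonneg]; linarith),
          ENNReal.ofReal_rpow_of_nonneg hx (by linarith)]

theorem lintegral_Ioi_ofReal_rpow {a : ℝ} (ha : a < -1) {t : ℝ} (ht : 0 < t) :
    ∫⁻ x in Ioi t, ENNReal.ofReal x ^ a =
      ENNReal.ofReal (-(a + 1))⁻¹ * ENNReal.ofReal t ^ (a + 1) := by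
  calc ∫⁻ x in Ioi t, ENNReal.ofReal x ^ a = ∫⁻ x in Ioi t, ENNReal.ofReal (x ^ a) :=
        setLIntegral_congr_fun measurableSet_Ioi fun x hx =>
          ENNReal.ofReal_rpow_of_pos (ht.trans hx)
    _ = ENNReal.ofReal (∫ x in Ioi t, x ^ a) := by
        rw [ofReal_integral_eq_lintegral_ofReal (integrableOn_Ioi_rpow_of_lt ha ht)]
        filter_upwards [ae_restrict_mem measurableSet_Ioi] with x hx
        exact Real.rpow_nonneg (ht.trans hx).le a
    _ = _ := by
        rw [integral_Ioi_rpow_of_lt ha ht, ← neg_div_neg_eq, neg_neg, div_eq_inv_mul,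
          ENNReal.ofReal_mul (by simp only [inv_nonneg]; linarith), ENNReal.ofReal_rpow_of_pos ht]

theorem lintegral_Ioi_mul_lintegral_Ioo (μ : Measure ℝ) [SFinite μ] (a : ℝ) {w g : ℝ → ℝ≥0∞}
    (hw : Measurable w) (hg : Measurable g) :
    ∫⁻ x in Ioi a, w x * ∫⁻ t in Ioo a x, g t ∂μ ∂μ =
      ∫⁻ t in Ioi a, g t * ∫⁻ x in Ioi t, w x ∂μ ∂μ := by
  set F : ℝ × ℝ → ℝ≥0∞ := {z | z.2 < z.1}.indicator fun z => w z.1 * g z.2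
  have hF : Measurable F := ((hw.comp measurable_fst).mul (hg.comp measurable_snd)).indicator
    (measurableSet_lt measurable_snd measurable_fst)
  calc ∫⁻ x in Ioi a, w x * ∫⁻ t in Ioo a x, g t ∂μ ∂μ
      = ∫⁻ x in Ioi a, ∫⁻ t in Ioi a, F (x, t) ∂μ ∂μ := by
        refine lintegral_congr fun x => ?_
        have : ∀ t, F (x, t) = (Iio x).indicator (fun t => w x * g t) t := fun t => by
          simp [F, indicator_apply]
        simp only [this]
        rw [lintegral_indicator measurableSet_Iio, Measure.restrict_restrict measurableSet_Iio,
          Iio_inter_Ioi, lintegral_const_mul _ hg]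
    _ = ∫⁻ t in Ioi a, ∫⁻ x in Ioi a, F (x, t) ∂μ ∂μ := lintegral_lintegral_swap hF.aemeasurable
    _ = ∫⁻ t in Ioi a, g t * ∫⁻ x in Ioi t, w x ∂μ ∂μ := by
        refine setLIntegral_congr_fun measurableSet_Ioi fun t ht => ?_
        have : ∀ x, F (x, t) = (Ioi t).indicator (fun x => g t * w x) x := fun x => by
          simp [F, indicator_apply, mul_comm]
        simp only [this]
        rw [lintegral_indicator measurableSet_Ioi, Measure.restrict_restrict measurableSet_Ioi,
          inter_eq_left.mpr (Ioi_subset_Ioi (le_of_lt ht)), lintegral_const_mul _ hw]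

theorem ENNReal.lintegral_rpow_le_weighted {α : Type*} [MeasurableSpace α] {μ : Measure α}
    {p q : ℝ} (hpq : p.HolderConjugate q) {f w : α → ℝ≥0∞} (hf : AEMeasurable f μ)
    (hw : AEMeasurable w μ) (hw_ne_zero : ∀ᵐ a ∂μ, w a ≠ 0) (hw_ne_top : ∀ᵐ a ∂μ, w a ≠ ∞) :
    (∫⁻ a, f a ∂μ) ^ p ≤ (∫⁻ a, (w a)⁻¹ ^ q ∂μ) ^ (p - 1) * ∫⁻ a, f a ^ p * w a ^ p ∂μ := by
  have hf_eq : ∫⁻ a, f a ∂μ = ∫⁻ a, (f * w * w⁻¹) a ∂μ := by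
    refine lintegral_congr_ae ?_
    filter_upwards [hw_ne_zero, hw_ne_top] with a h0 htop
    simp only [Pi.mul_apply, Pi.inv_apply, mul_assoc, ENNReal.mul_inv_cancel h0 htop, mul_one]
  have holder := ENNReal.lintegral_mul_le_Lp_mul_Lq μ hpq (hf.mul hw) hw.inv
  have hqp : 1 / q * p = p - 1 := by
    have := hpq.inv_add_inv_eq_one
    field_simp [hpq.ne_zero, hpq.symm.ne_zero] at this ⊢
    linarith
  calc (∫⁻ a, f a ∂μ) ^ p
      ≤ ((∫⁻ a, (f * w) a ^ p ∂μ) ^ (1 / p) * (∫⁻ a, w⁻¹ a ^ q ∂μ) ^ (1 / q)) ^ p := by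
        rw [hf_eq]; exact ENNReal.rpow_le_rpow holder hpq.nonneg
    _ = _ := by
        rw [ENNReal.mul_rpow_of_nonneg _ _ hpq.nonneg, ← ENNReal.rpow_mul, ← ENNReal.rpow_mul,
          one_div_mul_cancel hpq.ne_zero, ENNReal.rpow_one, hqp, mul_comm]
        simp only [Pi.mul_apply, Pi.inv_apply, ENNReal.mul_rpow_of_nonneg _ _ hpq.nonneg]

noncomputable def hardyMean (g : ℝ → ℝ≥0∞) (x : ℝ) : ℝ≥0∞ :=
  (ENNReal.ofReal x)⁻¹ * ∫⁻ t in Ioo 0 x, g t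

theorem hardyMean_rpow_le {p q : ℝ} (hpq : p.HolderConjugate q) {g : ℝ → ℝ≥0∞}
    (hg : Measurable g) {x : ℝ} (hx : 0 < x) :
    hardyMean g x ^ p ≤ ENNReal.ofReal q ^ (p - 1) * ENNReal.ofReal x ^ (1 / p - 2) *
      ∫⁻ t in Ioo 0 x, g t ^ p * ENNReal.ofReal t ^ (1 / q) := by
  have hp := hpq.pos
  have hq := hpq.symm.pos
  have hpq_inv : 1 / p + 1 / q = 1 := by simpa only [one_div] using hpq.inv_add_inv_eq_one
  have hx0 : ENNReal.ofReal x ≠ 0 := by positivity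
  set w : ℝ → ℝ≥0∞ := fun t => ENNReal.ofReal t ^ (1 / (p * q))
  have hw_inv : ∀ t, (w t)⁻¹ ^ q = ENNReal.ofReal t ^ (-(1 / p) : ℝ) := fun t => by
    rw [ENNReal.inv_rpow, ← ENNReal.rpow_mul, ← ENNReal.rpow_neg]
    congr 2; field_simp
  have hw_pow : ∀ t, w t ^ p = ENNReal.ofReal t ^ (1 / q) := fun t => by
    rw [← ENNReal.rpow_mul]
    congr 1; field_simp
  have hweight : (∫⁻ t in Ioo 0 x, (w t)⁻¹ ^ q) ^ (p - 1) =
      ENNReal.ofReal q ^ (p - 1) * ENNReal.ofReal x ^ ((p - 1) / q) := by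
    have : 1 / p < 1 := (div_lt_one hp).mpr hpq.lt
    simp only [hw_inv]
    rw [lintegral_Ioo_ofReal_rpow (by linarith) hx.le, show -(1 / p) + 1 = 1 / q by linarith,
      one_div, inv_inv, ENNReal.mul_rpow_of_nonneg _ _ (by linarith [hpq.lt]), ← ENNReal.rpow_mul,
      inv_mul_eq_div]
  have hw_pos : ∀ᵐ t ∂volume.restrict (Ioo 0 x), w t ≠ 0 := by
    filter_upwards [ae_restrict_mem measurableSet_Ioo] with t ht
    exact (ENNReal.rpow_pos (ENNReal.ofReal_pos.mpr ht.1) ENNReal.ofReal_ne_top).ne'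
  have hw_fin : ∀ᵐ t ∂volume.restrict (Ioo 0 x), w t ≠ ∞ :=
    ae_of_all _ fun t => ENNReal.rpow_ne_top_of_nonneg (by positivity) ENNReal.ofReal_ne_top
  have holder := ENNReal.lintegral_rpow_le_weighted hpq hg.aemeasurable (by fun_prop) hw_pos hw_fin
  rw [hweight] at holder
  simp only [hw_pow] at holder
  calc hardyMean g x ^ p = ENNReal.ofReal x ^ (-p) * (∫⁻ t in Ioo 0 x, g t) ^ p := by
        rw [hardyMean, ENNReal.mul_rpow_of_nonneg _ _ hp.le, ENNReal.inv_rpow, ENNReal.rpow_neg]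
    _ ≤ ENNReal.ofReal x ^ (-p) * (ENNReal.ofReal q ^ (p - 1) * ENNReal.ofReal x ^ ((p - 1) / q) *
          ∫⁻ t in Ioo 0 x, g t ^ p * ENNReal.ofReal t ^ (1 / q)) := by gcongr
    _ = ENNReal.ofReal q ^ (p - 1) * ENNReal.ofReal x ^ (-p + (p - 1) / q) *
          ∫⁻ t in Ioo 0 x, g t ^ p * ENNReal.ofReal t ^ (1 / q) := by
        rw [ENNReal.rpow_add _ _ hx0 ENNReal.ofReal_ne_top]; ring
    _ = _ := by
        congr 3
        field_simp at hpq_inv ⊢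
        linear_combination (p - 1) * hpq_inv

theorem lintegral_hardyMean_rpow_le {p q : ℝ} (hpq : p.HolderConjugate q) {g : ℝ → ℝ≥0∞}
    (hg : Measurable g) :
    ∫⁻ x in Ioi 0, hardyMean g x ^ p ≤ ENNReal.ofReal q ^ p * ∫⁻ t in Ioi 0, g t ^ p := by
  have hq := hpq.symm.pos
  have hpq_inv : 1 / p + 1 / q = 1 := by simpa only [one_div] using hpq.inv_add_inv_eq_one
  have hq0 : ENNReal.ofReal q ≠ 0 := by positivity
  have hq_rpow : ENNReal.ofReal q ^ (p - 1) * ENNReal.ofReal q = ENNReal.ofReal q ^ p := by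
    simpa only [sub_add_cancel, ENNReal.rpow_one, eq_comm] using
      ENNReal.rpow_add (p - 1) 1 hq0 ENNReal.ofReal_ne_top
  have htail : ∀ t ∈ Ioi (0 : ℝ), g t ^ p * ENNReal.ofReal t ^ (1 / q) *
      ∫⁻ x in Ioi t, ENNReal.ofReal x ^ (1 / p - 2) = ENNReal.ofReal q * g t ^ p := fun t ht => by
    have ht0 : ENNReal.ofReal t ≠ 0 := by simpa using ht
    rw [lintegral_Ioi_ofReal_rpow (by linarith [(div_lt_one hpq.pos).mpr hpq.lt]) ht,
      show 1 / p - 2 + 1 = -(1 / q) by linarith, neg_neg, one_div, inv_inv, ENNReal.rpow_neg,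
      mul_comm (ENNReal.ofReal q), ← mul_assoc, mul_assoc (g t ^ p),
      ENNReal.mul_inv_cancel (by positivity) (by simp [hq.le]), mul_one, mul_comm]
  calc ∫⁻ x in Ioi 0, hardyMean g x ^ p
      ≤ ∫⁻ x in Ioi 0, ENNReal.ofReal q ^ (p - 1) * (ENNReal.ofReal x ^ (1 / p - 2) *
          ∫⁻ t in Ioo 0 x, g t ^ p * ENNReal.ofReal t ^ (1 / q)) :=
        setLIntegral_mono' measurableSet_Ioi fun x hx =>
          (hardyMean_rpow_le hpq hg hx).trans_eq (mul_assoc _ _ _)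
    _ = ENNReal.ofReal q ^ (p - 1) * ∫⁻ t in Ioi 0, g t ^ p * ENNReal.ofReal t ^ (1 / q) *
          ∫⁻ x in Ioi t, ENNReal.ofReal x ^ (1 / p - 2) := by
        rw [lintegral_const_mul' _ _ (ENNReal.rpow_ne_top_of_nonneg (by linarith [hpq.lt])
          ENNReal.ofReal_ne_top), lintegral_Ioi_mul_lintegral_Ioo _ _ (by fun_prop) (by fun_prop)]
    _ = ENNReal.ofReal q ^ p * ∫⁻ t in Ioi 0, g t ^ p := by
        rw [setLIntegral_congr_fun measurableSet_Ioi htail,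
          lintegral_const_mul' _ _ ENNReal.ofReal_ne_top, ← mul_assoc, hq_rpow]

theorem eLpNorm_hardyMean_le {p q : ℝ} (hpq : p.HolderConjugate q) {g : ℝ → ℝ≥0∞}
    (hg : Measurable g) :
    eLpNorm (hardyMean g) (ENNReal.ofReal p) (volume.restrict (Ioi 0)) ≤
      ENNReal.ofReal q * eLpNorm g (ENNReal.ofReal p) (volume.restrict (Ioi 0)) := by
  have hp := hpq.pos
  have hp0 : ENNReal.ofReal p ≠ 0 := by positivity
  simp only [eLpNorm_eq_lintegral_rpow_enorm_toReal hp0 ENNReal.ofReal_ne_top,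
    ENNReal.toReal_ofReal hp.le, enorm_eq_self]
  calc (∫⁻ x in Ioi 0, hardyMean g x ^ p) ^ (1 / p)
      ≤ (ENNReal.ofReal q ^ p * ∫⁻ t in Ioi 0, g t ^ p) ^ (1 / p) :=
        ENNReal.rpow_le_rpow (lintegral_hardyMean_rpow_le hpq hg) (by positivity)
    _ = _ := by
        rw [ENNReal.mul_rpow_of_nonneg _ _ (by positivity), ← ENNReal.rpow_mul,
          mul_one_div_cancel hp.ne', ENNReal.rpow_one]

theorem enorm_inv_mul_integral_le_hardyMean (f : ℝ → ℝ) {x : ℝ} (hx : 0 < x) :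
    ‖x⁻¹ * ∫ t in Ioo 0 x, f t‖ₑ ≤ hardyMean (fun t => ‖f t‖ₑ) x := by
  rw [enorm_mul, enorm_inv hx.ne', Real.enorm_of_nonneg hx.le, hardyMean]
  gcongr
  exact enorm_integral_le_lintegral_enorm f

theorem hardy_inequality_general (p : ℝ) (hp : 1 < p) (f : ℝ → ℝ)
    (hfm : Measurable f) :
    eLpNorm (fun x : ℝ => x⁻¹ * ∫ t in Ioo (0:ℝ) x, f t) (ENNReal.ofReal p)
        (volume.restrict (Ioi 0)) ≤
      ENNReal.ofReal (p / (p - 1)) *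
        eLpNorm f (ENNReal.ofReal p) (volume.restrict (Ioi 0)) := by
  have hpq : p.HolderConjugate (p / (p - 1)) := Real.HolderConjugate.conjExponent hp
  calc eLpNorm (fun x : ℝ => x⁻¹ * ∫ t in Ioo (0:ℝ) x, f t) (ENNReal.ofReal p)
        (volume.restrict (Ioi 0))
      ≤ eLpNorm (hardyMean fun t => ‖f t‖ₑ) (ENNReal.ofReal p) (volume.restrict (Ioi 0)) := by
        refine eLpNorm_mono_enorm_ae ?_
        filter_upwards [ae_restrict_mem measurableSet_Ioi] with x hx
        simpa only [enorm_eq_self] using enorm_inv_mul_integral_le_hardyMean f hx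
    _ ≤ ENNReal.ofReal (p / (p - 1)) * eLpNorm f (ENNReal.ofReal p) (volume.restrict (Ioi 0)) := by
        simpa only [eLpNorm_enorm] using eLpNorm_hardyMean_le hpq hfm.enorm

/-- Hardy's inequality: for `1 < p < ∞` and every nonnegative integrable function `f`
on `(0,∞)`, the Hardy operator `H f x = x⁻¹ ∫₀ˣ f` satisfies
`‖H f‖_{L^p(0,∞)} ≤ (p/(p-1)) ‖f‖_{L^p(0,∞)}`. -/
theorem hardy_inequality (p : ℝ) (hp : 1 < p) (f : ℝ → ℝ)
    (hfm : Measurable f) (hf0 : ∀ x, 0 ≤ f x) (hfi : IntegrableOn f (Ioi 0)) :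
    eLpNorm (fun x : ℝ => x⁻¹ * ∫ t in Ioo (0:ℝ) x, f t) (ENNReal.ofReal p)
        (volume.restrict (Ioi 0)) ≤
      ENNReal.ofReal (p / (p - 1)) *
        eLpNorm f (ENNReal.ofReal p) (volume.restrict (Ioi 0)) :=
  hardy_inequality_general p hp f hfm
end

section
/- For 1 < p < ∞, the operator norm of the Hardy operator H f(x) = (1/x) ∫₀ˣ f(t) dt on L^p(0,∞) is exactly p/(p-1); that is, the constant p/(p-1) in Hardy's inequality cannot be improved. -/
/-!
With `q = p / (p - 1)`, Hölder's inequality applied to `φ = (φ t ^ s) * t ^ (-s)`, `s = 1 / (p q)`,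
gives `(∫₀ˣ φ) ^ p ≤ (q x ^ (1/q)) ^ (p - 1) ∫₀ˣ φ t ^ p t ^ (1/q) dt`. Multiplying by `x ^ (-p)`,
integrating over `x > 0` and exchanging the order of integration turns the right-hand side into
`q ^ p ∫ φ ^ p`, because `∫ₜ^∞ x ^ (-1 - 1/q) dx = q t ^ (-1/q)`.

The constant is sharp: `f = t ^ a` on `(0, 1)` with `a > -1/p` lies in `L^p`, and
`H f = f / (a + 1)` on `(0, 1)`, so `‖H f‖_p ≥ ‖f‖_p / (a + 1)`, where `1 / (a + 1) → q` as `a → -1/p`.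
-/

open MeasureTheory Set
open scoped ENNReal

lemma setIntegral_Ioo_zero_rpow {x r : ℝ} (hx : 0 ≤ x) (hr : -1 < r) :
    ∫ t in Ioo 0 x, t ^ r = x ^ (r + 1) / (r + 1) := by
  rw [← integral_Ioc_eq_integral_Ioo, ← intervalIntegral.integral_of_le hx,
    integral_rpow (Or.inl hr), Real.zero_rpow (by linarith), sub_zero]

lemma lintegral_Ioo_zero_rpow {x r : ℝ} (hx : 0 ≤ x) (hr : -1 < r) :
    ∫⁻ t in Ioo 0 x, ENNReal.ofReal (t ^ r) = ENNReal.ofReal (x ^ (r + 1) / (r + 1)) := by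
  have hint : IntegrableOn (fun t : ℝ => t ^ r) (Ioo 0 x) :=
    ((intervalIntegrable_iff_integrableOn_Ioc_of_le hx).mp
      (intervalIntegral.intervalIntegrable_rpow' hr)).mono_set Ioo_subset_Ioc_self
  rw [← setIntegral_Ioo_zero_rpow hx hr, ofReal_integral_eq_lintegral_ofReal hint]
  filter_upwards [ae_restrict_mem measurableSet_Ioo] with t ht
  exact Real.rpow_nonneg ht.1.le r

lemma ofReal_rpow_mul_ofReal_rpow {t : ℝ} (ht : 0 < t) (a b : ℝ) :
    ENNReal.ofReal (t ^ a) * ENNReal.ofReal (t ^ b) = ENNReal.ofReal (t ^ (a + b)) := by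
  rw [← ENNReal.ofReal_mul (Real.rpow_nonneg ht.le _), ← Real.rpow_add ht]

lemma ofReal_rpow_rpow {t : ℝ} (ht : 0 < t) (a b : ℝ) :
    ENNReal.ofReal (t ^ a) ^ b = ENNReal.ofReal (t ^ (a * b)) := by
  rw [ENNReal.ofReal_rpow_of_pos (Real.rpow_pos_of_pos ht _), ← Real.rpow_mul ht.le]

lemma lintegral_Ioi_rpow_neg_one_sub {t a : ℝ} (ht : 0 < t) (ha : 0 < a) :
    ∫⁻ x in Ioi t, ENNReal.ofReal (x ^ (-1 - a)) = ENNReal.ofReal (a⁻¹ * t ^ (-a)) := by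
  have he : -1 - a < -1 := by linarith
  rw [← ofReal_integral_eq_lintegral_ofReal (integrableOn_Ioi_rpow_of_lt he ht),
    integral_Ioi_rpow_of_lt he ht]
  · congr 1
    rw [show -1 - a + 1 = -a by ring, neg_div_neg_eq, div_eq_inv_mul]
  · filter_upwards [ae_restrict_mem measurableSet_Ioi] with x hx
    exact Real.rpow_nonneg (ht.trans hx).le _

lemma lintegral_Ioi_mul_lintegral_Ioo_swap {μ ν : Measure ℝ} [SFinite μ] [SFinite ν] (a : ℝ)
    {w ψ : ℝ → ℝ≥0∞} (hw : Measurable w) (hψ : Measurable ψ) :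
    ∫⁻ x in Ioi a, w x * ∫⁻ t in Ioo a x, ψ t ∂ν ∂μ =
      ∫⁻ t in Ioi a, ψ t * ∫⁻ x in Ioi t, w x ∂μ ∂ν := by
  have hF : Measurable (Function.uncurry fun x t => w x * (Iio x).indicator ψ t) :=
    (hw.comp measurable_fst).mul <|
      (hψ.comp measurable_snd).indicator (measurableSet_lt measurable_snd measurable_fst)
  have hinner (x : ℝ) :
      ∫⁻ t in Ioo a x, ψ t ∂ν = ∫⁻ t in Ioi a, (Iio x).indicator ψ t ∂ν := by
    rw [lintegral_indicator measurableSet_Iio, Measure.restrict_restrict measurableSet_Iio,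
      inter_comm, Ioi_inter_Iio]
  calc ∫⁻ x in Ioi a, w x * ∫⁻ t in Ioo a x, ψ t ∂ν ∂μ
      = ∫⁻ x in Ioi a, ∫⁻ t in Ioi a, w x * (Iio x).indicator ψ t ∂ν ∂μ := by
        simp_rw [hinner, lintegral_const_mul _ (hψ.indicator measurableSet_Iio)]
    _ = ∫⁻ t in Ioi a, ∫⁻ x in Ioi a, w x * (Iio x).indicator ψ t ∂μ ∂ν :=
        lintegral_lintegral_swap hF.aemeasurable
    _ = ∫⁻ t in Ioi a, ψ t * ∫⁻ x in Ioi a, (Ioi t).indicator w x ∂μ ∂ν := by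
        have hswap : ∀ x t, w x * (Iio x).indicator ψ t = ψ t * (Ioi t).indicator w x := by
          intro x t
          by_cases htx : t < x <;> simp [indicator, htx, mul_comm]
        simp_rw [hswap, lintegral_const_mul _ (hw.indicator measurableSet_Ioi)]
    _ = ∫⁻ t in Ioi a, ψ t * ∫⁻ x in Ioi t, w x ∂μ ∂ν :=
        setLIntegral_congr_fun measurableSet_Ioi fun t (ht : a < t) => by
          rw [lintegral_indicator measurableSet_Ioi, Measure.restrict_restrict measurableSet_Ioi,
            inter_eq_left.mpr (Ioi_subset_Ioi ht.le)]

variable {p q : ℝ}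

lemma rpow_lintegral_Ioo_zero_le (hpq : p.HolderConjugate q) {φ : ℝ → ℝ≥0∞}
    (hφ : Measurable φ) {x : ℝ} (hx : 0 < x) :
    (∫⁻ t in Ioo 0 x, φ t) ^ p ≤
      ENNReal.ofReal (q * x ^ q⁻¹) ^ (p - 1) *
        ∫⁻ t in Ioo 0 x, φ t ^ p * ENNReal.ofReal (t ^ q⁻¹) := by
  set s := (p * q)⁻¹
  set K := ∫⁻ t in Ioo 0 x, φ t ^ p * ENNReal.ofReal (t ^ q⁻¹)
  set M := ENNReal.ofReal (q * x ^ q⁻¹)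
  have hsplit : ∫⁻ t in Ioo 0 x, φ t = ∫⁻ t in Ioo 0 x,
      ((fun t => φ t * ENNReal.ofReal (t ^ s)) * fun t => ENNReal.ofReal (t ^ (-s))) t :=
    setLIntegral_congr_fun measurableSet_Ioo fun t ht => by
      rw [Pi.mul_apply, mul_assoc, ofReal_rpow_mul_ofReal_rpow ht.1, add_neg_cancel,
        Real.rpow_zero, ENNReal.ofReal_one, mul_one]
  have hK : ∫⁻ t in Ioo 0 x, (φ t * ENNReal.ofReal (t ^ s)) ^ p = K :=
    setLIntegral_congr_fun measurableSet_Ioo fun t ht => by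
      rw [ENNReal.mul_rpow_of_nonneg _ _ hpq.nonneg, ofReal_rpow_rpow ht.1,
        show s * p = q⁻¹ by simp only [s]; field_simp [hpq.ne_zero]]
  have hM : ∫⁻ t in Ioo 0 x, ENNReal.ofReal (t ^ (-s)) ^ q = M := by
    have hexp : -s * q = -p⁻¹ := by simp only [s]; field_simp [hpq.symm.ne_zero]
    rw [setLIntegral_congr_fun measurableSet_Ioo fun t ht => by rw [ofReal_rpow_rpow ht.1, hexp],
      lintegral_Ioo_zero_rpow hx.le (by linarith [inv_lt_one_of_one_lt₀ hpq.lt]),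
      neg_add_eq_sub, hpq.one_sub_inv, div_inv_eq_mul, mul_comm]
  have holder : ∫⁻ t in Ioo 0 x, φ t ≤ K ^ (1 / p) * M ^ (1 / q) := by
    rw [hsplit, ← hK, ← hM]
    exact ENNReal.lintegral_mul_le_Lp_mul_Lq _ hpq (by fun_prop) (by fun_prop)
  calc (∫⁻ t in Ioo 0 x, φ t) ^ p ≤ (K ^ (1 / p) * M ^ (1 / q)) ^ p :=
        ENNReal.rpow_le_rpow holder hpq.nonneg
    _ = M ^ (p - 1) * K := by
        rw [ENNReal.mul_rpow_of_nonneg _ _ hpq.nonneg, ← ENNReal.rpow_mul, ← ENNReal.rpow_mul,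
          one_div_mul_cancel hpq.ne_zero, ENNReal.rpow_one, one_div_mul_eq_div,
          hpq.div_conj_eq_sub_one, mul_comm]

lemma ofReal_rpow_neg_mul_rpow_sub_one (hpq : p.HolderConjugate q) {x : ℝ} (hx : 0 < x) :
    ENNReal.ofReal (x ^ (-p)) * ENNReal.ofReal (q * x ^ q⁻¹) ^ (p - 1) =
      ENNReal.ofReal q ^ (p - 1) * ENNReal.ofReal (x ^ (-1 - q⁻¹)) := by
  have hexp : -p + q⁻¹ * (p - 1) = -1 - q⁻¹ := by
    rw [← hpq.one_sub_inv]
    field_simp [hpq.ne_zero]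
    ring
  rw [ENNReal.ofReal_mul hpq.symm.nonneg, ENNReal.mul_rpow_of_nonneg _ _ hpq.sub_one_pos.le,
    ofReal_rpow_rpow hx, mul_left_comm, ofReal_rpow_mul_ofReal_rpow hx, hexp]

theorem lintegral_hardy_le (hpq : p.HolderConjugate q) {φ : ℝ → ℝ≥0∞}
    (hφ : Measurable φ) :
    ∫⁻ x in Ioi 0, ((ENNReal.ofReal x)⁻¹ * ∫⁻ t in Ioo 0 x, φ t) ^ p ≤
      ENNReal.ofReal q ^ p * ∫⁻ t in Ioi 0, φ t ^ p := by
  set ψ := fun t => φ t ^ p * ENNReal.ofReal (t ^ q⁻¹)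
  have hC : ENNReal.ofReal q ^ (p - 1) ≠ ∞ :=
    ENNReal.rpow_ne_top_of_nonneg hpq.sub_one_pos.le ENNReal.ofReal_ne_top
  calc ∫⁻ x in Ioi 0, ((ENNReal.ofReal x)⁻¹ * ∫⁻ t in Ioo 0 x, φ t) ^ p
      ≤ ∫⁻ x in Ioi 0, ENNReal.ofReal q ^ (p - 1) *
          (ENNReal.ofReal (x ^ (-1 - q⁻¹)) * ∫⁻ t in Ioo 0 x, ψ t) := by
        refine setLIntegral_mono' measurableSet_Ioi fun x (hx : 0 < x) => ?_
        rw [ENNReal.mul_rpow_of_nonneg _ _ hpq.nonneg, ← ENNReal.ofReal_inv_of_pos hx,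
          ENNReal.ofReal_rpow_of_pos (inv_pos.mpr hx), Real.inv_rpow hx.le, ← Real.rpow_neg hx.le,
          ← mul_assoc, ← ofReal_rpow_neg_mul_rpow_sub_one hpq hx, mul_assoc]
        gcongr
        exact rpow_lintegral_Ioo_zero_le hpq hφ hx
    _ = ENNReal.ofReal q ^ (p - 1) *
          ∫⁻ t in Ioi 0, ψ t * ∫⁻ x in Ioi t, ENNReal.ofReal (x ^ (-1 - q⁻¹)) := by
        rw [lintegral_const_mul' _ _ hC, lintegral_Ioi_mul_lintegral_Ioo_swap 0 (by fun_prop)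
          (by fun_prop)]
    _ = ENNReal.ofReal q ^ (p - 1) * ∫⁻ t in Ioi 0, ENNReal.ofReal q * φ t ^ p := by
        congr 1
        refine setLIntegral_congr_fun measurableSet_Ioi fun t (ht : 0 < t) => ?_
        rw [lintegral_Ioi_rpow_neg_one_sub ht hpq.symm.inv_pos, inv_inv,
          ENNReal.ofReal_mul hpq.symm.nonneg, mul_left_comm, mul_assoc,
          ofReal_rpow_mul_ofReal_rpow ht, add_neg_cancel, Real.rpow_zero, ENNReal.ofReal_one,
          mul_one, mul_comm]
    _ = ENNReal.ofReal q ^ p * ∫⁻ t in Ioi 0, φ t ^ p := by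
        rw [lintegral_const_mul' _ _ ENNReal.ofReal_ne_top, ← mul_assoc]
        nth_rw 2 [← ENNReal.rpow_one (ENNReal.ofReal q)]
        rw [← ENNReal.rpow_add _ _ (by simpa using hpq.symm.pos) ENNReal.ofReal_ne_top,
          sub_add_cancel]

noncomputable def hardyOperator (f : ℝ → ℝ) (x : ℝ) : ℝ := x⁻¹ * ∫ t in Ioo 0 x, f t

lemma hardyOperator_nonneg {f : ℝ → ℝ} (hf : 0 ≤ f) {x : ℝ} (hx : 0 ≤ x) :
    0 ≤ hardyOperator f x :=
  mul_nonneg (inv_nonneg.mpr hx) (integral_nonneg hf)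

lemma enorm_hardyOperator_le (f : ℝ → ℝ) {x : ℝ} (hx : 0 < x) :
    ‖hardyOperator f x‖ₑ ≤ (ENNReal.ofReal x)⁻¹ * ∫⁻ t in Ioo 0 x, ‖f t‖ₑ := by
  rw [hardyOperator, enorm_mul, Real.enorm_eq_ofReal (inv_nonneg.mpr hx.le),
    ENNReal.ofReal_inv_of_pos hx]
  gcongr
  exact enorm_integral_le_lintegral_enorm f

theorem eLpNorm_hardyOperator_le (hpq : p.HolderConjugate q) {f : ℝ → ℝ} (hf : Measurable f) :
    eLpNorm (hardyOperator f) (ENNReal.ofReal p) (volume.restrict (Ioi 0)) ≤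
      ENNReal.ofReal q * eLpNorm f (ENNReal.ofReal p) (volume.restrict (Ioi 0)) := by
  have hp : ENNReal.ofReal p ≠ 0 := by simpa using hpq.pos
  rw [eLpNorm_eq_lintegral_rpow_enorm_toReal hp ENNReal.ofReal_ne_top,
    eLpNorm_eq_lintegral_rpow_enorm_toReal hp ENNReal.ofReal_ne_top,
    ENNReal.toReal_ofReal hpq.nonneg]
  calc (∫⁻ x in Ioi 0, ‖hardyOperator f x‖ₑ ^ p) ^ (1 / p)
      ≤ (∫⁻ x in Ioi 0, ((ENNReal.ofReal x)⁻¹ * ∫⁻ t in Ioo 0 x, ‖f t‖ₑ) ^ p) ^ (1 / p) :=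
        ENNReal.rpow_le_rpow (setLIntegral_mono' measurableSet_Ioi fun x (hx : 0 < x) =>
          ENNReal.rpow_le_rpow (enorm_hardyOperator_le f hx) hpq.nonneg)
          (one_div_nonneg.mpr hpq.nonneg)
    _ ≤ (ENNReal.ofReal q ^ p * ∫⁻ t in Ioi 0, ‖f t‖ₑ ^ p) ^ (1 / p) :=
        ENNReal.rpow_le_rpow (lintegral_hardy_le hpq hf.enorm)
          (one_div_nonneg.mpr hpq.nonneg)
    _ = ENNReal.ofReal q * (∫⁻ t in Ioi 0, ‖f t‖ₑ ^ p) ^ (1 / p) := by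
        rw [ENNReal.mul_rpow_of_nonneg _ _ (one_div_nonneg.mpr hpq.nonneg), ← ENNReal.rpow_mul,
          mul_one_div_cancel hpq.ne_zero, ENNReal.rpow_one]

lemma hardyOperator_indicator_rpow {a x : ℝ} (ha : -1 < a) (hx : x ∈ Ioo 0 1) :
    hardyOperator ((Ioo (0 : ℝ) 1).indicator (· ^ a)) x = (a + 1)⁻¹ * x ^ a := by
  rw [hardyOperator, setIntegral_congr_fun measurableSet_Ioo fun t ht =>
      indicator_of_mem (show t ∈ Ioo (0 : ℝ) 1 from ⟨ht.1, ht.2.trans hx.2⟩) _,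
    setIntegral_Ioo_zero_rpow hx.1.le ha, Real.rpow_add_one hx.1.ne']
  field_simp [hx.1.ne']

lemma inv_add_one_mul_le_hardyOperator_indicator_rpow {a x : ℝ} (ha : -1 < a) (hx : 0 < x) :
    (a + 1)⁻¹ * (Ioo (0 : ℝ) 1).indicator (· ^ a) x ≤
      hardyOperator ((Ioo (0 : ℝ) 1).indicator (· ^ a)) x := by
  by_cases hx1 : x < 1
  · have hx' : x ∈ Ioo (0 : ℝ) 1 := ⟨hx, hx1⟩
    rw [hardyOperator_indicator_rpow ha hx', indicator_of_mem hx']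
  · rw [indicator_of_notMem fun h => hx1 h.2, mul_zero]
    exact hardyOperator_nonneg (indicator_nonneg fun t ht => Real.rpow_nonneg ht.1.le a) hx.le

lemma ofReal_mul_eLpNorm_le_eLpNorm_hardyOperator_indicator_rpow {a : ℝ} (ha : -1 < a)
    (r : ℝ≥0∞) :
    ENNReal.ofReal (a + 1)⁻¹ *
        eLpNorm ((Ioo (0 : ℝ) 1).indicator (· ^ a)) r (volume.restrict (Ioi 0)) ≤
      eLpNorm (hardyOperator ((Ioo (0 : ℝ) 1).indicator (· ^ a))) r (volume.restrict (Ioi 0)) := by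
  have hc : 0 ≤ (a + 1)⁻¹ := by rw [inv_nonneg]; linarith
  rw [← Real.enorm_eq_ofReal hc, ← eLpNorm_const_smul]
  refine eLpNorm_mono_ae_real ?_
  filter_upwards [ae_restrict_mem measurableSet_Ioi] with x (hx : 0 < x)
  rw [Pi.smul_apply, smul_eq_mul, Real.norm_of_nonneg
    (mul_nonneg hc (indicator_nonneg (fun t ht => Real.rpow_nonneg ht.1.le a) x))]
  exact inv_add_one_mul_le_hardyOperator_indicator_rpow ha hx

lemma eLpNorm_indicator_rpow {a : ℝ} (hp : 0 < p) (hap : -1 < a * p) :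
    eLpNorm ((Ioo (0 : ℝ) 1).indicator (· ^ a)) (ENNReal.ofReal p) (volume.restrict (Ioi 0)) =
      ENNReal.ofReal (a * p + 1)⁻¹ ^ (1 / p) := by
  rw [eLpNorm_eq_lintegral_rpow_enorm_toReal (by simpa using hp) ENNReal.ofReal_ne_top,
    ENNReal.toReal_ofReal hp.le]
  have hpow (x : ℝ) : ‖(Ioo (0 : ℝ) 1).indicator (· ^ a) x‖ₑ ^ p =
      (Ioo (0 : ℝ) 1).indicator (fun t => ENNReal.ofReal (t ^ (a * p))) x := by
    by_cases hx : x ∈ Ioo 0 1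
    · rw [indicator_of_mem hx, indicator_of_mem hx,
        Real.enorm_eq_ofReal (Real.rpow_nonneg hx.1.le a), ofReal_rpow_rpow hx.1]
    · rw [indicator_of_notMem hx, indicator_of_notMem hx, enorm_zero, ENNReal.zero_rpow_of_pos hp]
  rw [lintegral_congr hpow, lintegral_indicator measurableSet_Ioo,
    Measure.restrict_restrict measurableSet_Ioo, inter_eq_left.mpr Ioo_subset_Ioi_self,
    lintegral_Ioo_zero_rpow zero_le_one hap, Real.one_rpow, one_div]

theorem exists_lt_eLpNorm_hardyOperator (hpq : p.HolderConjugate q) {c : ℝ} (hc : c < q) :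
    ∃ f : ℝ → ℝ, Measurable f ∧ (∀ x, 0 ≤ f x) ∧
      eLpNorm f (ENNReal.ofReal p) (volume.restrict (Ioi 0)) ≠ 0 ∧
      eLpNorm f (ENNReal.ofReal p) (volume.restrict (Ioi 0)) ≠ ⊤ ∧
      ENNReal.ofReal c * eLpNorm f (ENNReal.ofReal p) (volume.restrict (Ioi 0)) <
        eLpNorm (hardyOperator f) (ENNReal.ofReal p) (volume.restrict (Ioi 0)) := by
  obtain ⟨r, hcr, hrq⟩ := exists_between (max_lt hc hpq.symm.pos)
  have hr : 0 < r := (le_max_right c 0).trans_lt hcr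
  have ha : -1 < r⁻¹ - 1 := by linarith [inv_pos.mpr hr]
  have hap : -1 < (r⁻¹ - 1) * p := by
    have : p - 1 < r⁻¹ * p := by
      rw [lt_inv_mul_iff₀ hr]
      linarith [(lt_div_iff₀ hpq.sub_one_pos).mp (hpq.conjugate_eq ▸ hrq)]
    linarith
  -- the exponent `a = r⁻¹ - 1` makes `H f = r f` on `(0, 1)`
  set f := (Ioo (0 : ℝ) 1).indicator (· ^ (r⁻¹ - 1))
  have hN := eLpNorm_indicator_rpow hpq.pos hap
  have hN0 : eLpNorm f (ENNReal.ofReal p) (volume.restrict (Ioi 0)) ≠ 0 := by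
    rw [hN]
    exact (ENNReal.rpow_pos (ENNReal.ofReal_pos.mpr (inv_pos.mpr (by linarith)))
      ENNReal.ofReal_ne_top).ne'
  have hNtop : eLpNorm f (ENNReal.ofReal p) (volume.restrict (Ioi 0)) ≠ ⊤ := by
    rw [hN]
    exact ENNReal.rpow_ne_top_of_nonneg (one_div_nonneg.mpr hpq.nonneg) ENNReal.ofReal_ne_top
  refine ⟨f, (by fun_prop : Measurable _).indicator measurableSet_Ioo,
    indicator_nonneg fun t ht => Real.rpow_nonneg ht.1.le _, hN0, hNtop, ?_⟩
  calc ENNReal.ofReal c * eLpNorm f (ENNReal.ofReal p) (volume.restrict (Ioi 0))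
      < ENNReal.ofReal r * eLpNorm f (ENNReal.ofReal p) (volume.restrict (Ioi 0)) :=
        ENNReal.mul_lt_mul_left hN0 hNtop
          ((ENNReal.ofReal_lt_ofReal_iff hr).mpr ((le_max_left c 0).trans_lt hcr))
    _ ≤ eLpNorm (hardyOperator f) (ENNReal.ofReal p) (volume.restrict (Ioi 0)) := by
        simpa only [sub_add_cancel, inv_inv] using
          ofReal_mul_eLpNorm_le_eLpNorm_hardyOperator_indicator_rpow ha (ENNReal.ofReal p)

/-- The operator norm of the Hardy operator `H f x = x⁻¹ ∫₀ˣ f` on `L^p(0,∞)` is exactly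
`p/(p-1)`: the inequality `‖H f‖_p ≤ (p/(p-1)) ‖f‖_p` holds for all nonnegative measurable
`f`, and for every `c < p/(p-1)` there is a nontrivial `f` with `‖H f‖_p > c ‖f‖_p`. -/
theorem hardy_operator_norm (p : ℝ) (hp : 1 < p) :
    (∀ f : ℝ → ℝ, Measurable f → (∀ x, 0 ≤ f x) →
      eLpNorm (fun x : ℝ => x⁻¹ * ∫ t in Ioo (0:ℝ) x, f t) (ENNReal.ofReal p)
          (volume.restrict (Ioi 0)) ≤
        ENNReal.ofReal (p / (p - 1)) *
          eLpNorm f (ENNReal.ofReal p) (volume.restrict (Ioi 0))) ∧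
    (∀ c : ℝ, c < p / (p - 1) → ∃ f : ℝ → ℝ, Measurable f ∧ (∀ x, 0 ≤ f x) ∧
      eLpNorm f (ENNReal.ofReal p) (volume.restrict (Ioi 0)) ≠ 0 ∧
      eLpNorm f (ENNReal.ofReal p) (volume.restrict (Ioi 0)) ≠ ⊤ ∧
      ENNReal.ofReal c * eLpNorm f (ENNReal.ofReal p) (volume.restrict (Ioi 0)) <
        eLpNorm (fun x : ℝ => x⁻¹ * ∫ t in Ioo (0:ℝ) x, f t) (ENNReal.ofReal p)
          (volume.restrict (Ioi 0))) := by
  have hpq : p.HolderConjugate (p / (p - 1)) :=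
    (Real.holderConjugate_iff_eq_conjExponent hp).mpr rfl
  exact ⟨fun f hf _ => eLpNorm_hardyOperator_le hpq hf,
    fun c hc => exists_lt_eLpNorm_hardyOperator hpq hc⟩
end

section
/- For 1 < p < ∞ and nonnegative measurable f on (0,∞)², the two-dimensional rectangular Hardy operator 𝔥f(x₁,x₂) = (x₁x₂)⁻¹ ∫₀^{x₁}∫₀^{x₂} f(t₁,t₂) dt₁ dt₂ satisfies ‖𝔥f‖_{L^p} ≤ (p/(p-1))² ‖f‖_{L^p}. -/
/-!
Substituting `t = (x₁ s₁, x₂ s₂)` writes the rectangular average as an average of dilates of `f`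
over the unit square: `𝔥f(x) = ∫_{(0,1)²} f(x₁ s₁, x₂ s₂) ds`. With `q = p/(p-1)`, Hölder's
inequality against the weight `(s₁ s₂)^{1/q}` gives
`|𝔥f(x)|^p ≤ q^{2p/q} ∫_{(0,1)²} |f(x₁ s₁, x₂ s₂)|^p (s₁ s₂)^{1/q} ds`.
Integrating in `x`, exchanging the integrals and undoing the dilation, which costs `(s₁ s₂)⁻¹`,
leaves `∫_{(0,1)²} (s₁ s₂)^{-1/p} ds = q²`, so `‖𝔥f‖_p^p ≤ q^{2p} ‖f‖_p^p`.
-/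

open MeasureTheory Set ENNReal

theorem lintegral_rpow_le_lintegral_rpow_mul_weight {α : Type*} [MeasurableSpace α]
    {μ : Measure α} {p q : ℝ} (hpq : p.HolderConjugate q) {f w : α → ℝ≥0∞}
    (hf : AEMeasurable f μ) (hw : AEMeasurable w μ) (hw0 : ∀ᵐ a ∂μ, w a ≠ 0)
    (hw_top : ∀ᵐ a ∂μ, w a ≠ ∞) :
    (∫⁻ a, f a ∂μ) ^ p ≤ (∫⁻ a, f a ^ p * w a ∂μ) * (∫⁻ a, w a ^ (-(q / p)) ∂μ) ^ (p / q) := by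
  have hp : 0 < p := hpq.pos
  have hsplit : ∀ᵐ a ∂μ, f a = f a * w a ^ p⁻¹ * w a ^ (-p⁻¹) := by
    filter_upwards [hw0, hw_top] with a h0 htop
    rw [mul_assoc, ← ENNReal.rpow_add _ _ h0 htop, add_neg_cancel, ENNReal.rpow_zero, mul_one]
  have hfirst : ∀ a, (f a * w a ^ p⁻¹) ^ p = f a ^ p * w a := fun a => by
    rw [ENNReal.mul_rpow_of_nonneg _ _ hp.le, ← ENNReal.rpow_mul, inv_mul_cancel₀ hp.ne',
      ENNReal.rpow_one]
  have hsecond : ∀ a, (w a ^ (-p⁻¹)) ^ q = w a ^ (-(q / p)) := fun a => by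
    rw [← ENNReal.rpow_mul, neg_mul, inv_mul_eq_div]
  calc (∫⁻ a, f a ∂μ) ^ p
      = (∫⁻ a, f a * w a ^ p⁻¹ * w a ^ (-p⁻¹) ∂μ) ^ p := by rw [lintegral_congr_ae hsplit]
    _ ≤ ((∫⁻ a, (f a * w a ^ p⁻¹) ^ p ∂μ) ^ (1 / p) *
          (∫⁻ a, (w a ^ (-p⁻¹)) ^ q ∂μ) ^ (1 / q)) ^ p :=
        ENNReal.rpow_le_rpow (ENNReal.lintegral_mul_le_Lp_mul_Lq μ hpq (by fun_prop) (by fun_prop))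
          hp.le
    _ = (∫⁻ a, f a ^ p * w a ∂μ) * (∫⁻ a, w a ^ (-(q / p)) ∂μ) ^ (p / q) := by
        simp only [hfirst, hsecond]
        rw [ENNReal.mul_rpow_of_nonneg _ _ hp.le, ← ENNReal.rpow_mul, ← ENNReal.rpow_mul,
          one_div_mul_cancel hp.ne', ENNReal.rpow_one, one_div_mul_eq_div]

theorem map_volume_prodMap_mul {c₁ c₂ : ℝ} (h₁ : c₁ ≠ 0) (h₂ : c₂ ≠ 0) :
    Measure.map (Prod.map (c₁ * ·) (c₂ * ·)) (volume : Measure (ℝ × ℝ)) =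
      ENNReal.ofReal |c₁ * c₂|⁻¹ • volume := by
  rw [Measure.volume_eq_prod, ← Measure.map_prod_map _ _ (measurable_const_mul c₁)
    (measurable_const_mul c₂), Real.map_volume_mul_left h₁, Real.map_volume_mul_left h₂,
    Measure.prod_smul_left, Measure.prod_smul_right, smul_smul, ← ENNReal.ofReal_mul (abs_nonneg _),
    ← abs_mul, ← mul_inv, abs_inv]

theorem setLIntegral_comp_prodMap_mul {g : ℝ × ℝ → ℝ≥0∞} (hg : Measurable g) {c₁ c₂ : ℝ}
    (h₁ : c₁ ≠ 0) (h₂ : c₂ ≠ 0) {s : Set (ℝ × ℝ)} (hs : MeasurableSet s) :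
    ∫⁻ x in Prod.map (c₁ * ·) (c₂ * ·) ⁻¹' s, g (c₁ * x.1, c₂ * x.2) =
      ENNReal.ofReal |c₁ * c₂|⁻¹ * ∫⁻ t in s, g t := by
  calc ∫⁻ x in Prod.map (c₁ * ·) (c₂ * ·) ⁻¹' s, g (c₁ * x.1, c₂ * x.2)
      = ∫⁻ t in s, g t ∂(Measure.map (Prod.map (c₁ * ·) (c₂ * ·)) volume) :=
        (setLIntegral_map hs hg (by fun_prop)).symm
    _ = ENNReal.ofReal |c₁ * c₂|⁻¹ * ∫⁻ t in s, g t := by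
        rw [map_volume_prodMap_mul h₁ h₂, Measure.restrict_smul, lintegral_smul_measure,
          smul_eq_mul]

theorem lintegral_Ioo_prod_Ioo_eq_mul_lintegral_unitSquare {g : ℝ × ℝ → ℝ≥0∞} (hg : Measurable g)
    {x₁ x₂ : ℝ} (h₁ : 0 < x₁) (h₂ : 0 < x₂) :
    ∫⁻ t in Ioo 0 x₁ ×ˢ Ioo 0 x₂, g t =
      ENNReal.ofReal (x₁ * x₂) * ∫⁻ s in Ioo 0 1 ×ˢ Ioo 0 1, g (x₁ * s.1, x₂ * s.2) := by
  have := setLIntegral_comp_prodMap_mul hg h₁.ne' h₂.ne' (s := Ioo 0 x₁ ×ˢ Ioo 0 x₂)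
    (measurableSet_Ioo.prod measurableSet_Ioo)
  rw [preimage_prod_map_prod, preimage_const_mul_Ioo₀ _ _ h₁, preimage_const_mul_Ioo₀ _ _ h₂,
    zero_div, zero_div, div_self h₁.ne', div_self h₂.ne', abs_of_pos (by positivity)] at this
  rw [this, ← mul_assoc, ← ENNReal.ofReal_mul (by positivity), mul_inv_cancel₀ (by positivity),
    ENNReal.ofReal_one, one_mul]

theorem lintegral_Ioi_prod_Ioi_comp_mul {g : ℝ × ℝ → ℝ≥0∞} (hg : Measurable g)
    {c₁ c₂ : ℝ} (h₁ : 0 < c₁) (h₂ : 0 < c₂) :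
    ∫⁻ x in Ioi 0 ×ˢ Ioi 0, g (x.1 * c₁, x.2 * c₂) =
      (ENNReal.ofReal (c₁ * c₂))⁻¹ * ∫⁻ t in Ioi 0 ×ˢ Ioi 0, g t := by
  have := setLIntegral_comp_prodMap_mul hg h₁.ne' h₂.ne' (s := Ioi 0 ×ˢ Ioi 0)
    (measurableSet_Ioi.prod measurableSet_Ioi)
  rw [preimage_prod_map_prod, preimage_const_mul_Ioi₀ _ h₁, preimage_const_mul_Ioi₀ _ h₂,
    zero_div, zero_div, abs_of_pos (by positivity),
    ENNReal.ofReal_inv_of_pos (by positivity)] at this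
  exact (lintegral_congr fun x => by rw [mul_comm x.1, mul_comm x.2]).trans this

theorem lintegral_Ioo_zero_one_ofReal_rpow {a : ℝ} (ha : -1 < a) :
    ∫⁻ s in Ioo 0 1, ENNReal.ofReal s ^ a = ENNReal.ofReal (a + 1)⁻¹ := by
  have hint : IntegrableOn (fun s : ℝ => s ^ a) (Ioo 0 1) :=
    (intervalIntegral.intervalIntegrable_rpow' ha).1.mono_set Ioo_subset_Ioc_self
  rw [setLIntegral_congr_fun measurableSet_Ioo fun s hs => ENNReal.ofReal_rpow_of_pos hs.1,
    ← ofReal_integral_eq_lintegral_ofReal hint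
      (ae_restrict_of_forall_mem measurableSet_Ioo fun s hs => Real.rpow_nonneg hs.1.le a),
    ← integral_Ioc_eq_integral_Ioo, ← intervalIntegral.integral_of_le zero_le_one,
    integral_rpow (Or.inl ha), Real.one_rpow, Real.zero_rpow (by linarith), sub_zero, one_div]

theorem lintegral_unitSquare_ofReal_mul_rpow_neg_inv {p q : ℝ} (hpq : p.HolderConjugate q) :
    ∫⁻ s in Ioo 0 1 ×ˢ Ioo 0 1, ENNReal.ofReal (s.1 * s.2) ^ (-p⁻¹) =
      ENNReal.ofReal q ^ 2 := by
  have hfactor : ∀ s ∈ Ioo (0:ℝ) 1 ×ˢ Ioo (0:ℝ) 1, ENNReal.ofReal (s.1 * s.2) ^ (-p⁻¹) =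
      ENNReal.ofReal s.1 ^ (-p⁻¹) * ENNReal.ofReal s.2 ^ (-p⁻¹) := fun s hs => by
    rw [ENNReal.ofReal_mul hs.1.1.le, ENNReal.mul_rpow_of_ne_zero
      (ENNReal.ofReal_pos.2 hs.1.1).ne' (ENNReal.ofReal_pos.2 hs.2.1).ne']
  have hq : -p⁻¹ + 1 = q⁻¹ := by linarith [hpq.inv_add_inv_eq_one]
  rw [setLIntegral_congr_fun (measurableSet_Ioo.prod measurableSet_Ioo) hfactor,
    Measure.volume_eq_prod, ← Measure.prod_restrict,
    lintegral_prod_mul (f := fun t => ENNReal.ofReal t ^ (-p⁻¹))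
      (g := fun t => ENNReal.ofReal t ^ (-p⁻¹)) (by fun_prop) (by fun_prop),
    lintegral_Ioo_zero_one_ofReal_rpow (by linarith [hpq.symm.inv_pos]), hq, inv_inv, sq]

theorem lintegral_unitSquare_rpow_le {p q : ℝ} (hpq : p.HolderConjugate q) {g : ℝ × ℝ → ℝ≥0∞}
    (hg : Measurable g) :
    (∫⁻ s in Ioo 0 1 ×ˢ Ioo 0 1, g s) ^ p ≤
      (∫⁻ s in Ioo 0 1 ×ˢ Ioo 0 1, g s ^ p * ENNReal.ofReal (s.1 * s.2) ^ q⁻¹) *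
        (ENNReal.ofReal q ^ 2) ^ (p / q) := by
  have hsq : MeasurableSet (Ioo (0:ℝ) 1 ×ˢ Ioo (0:ℝ) 1) := measurableSet_Ioo.prod measurableSet_Ioo
  have hpos : ∀ᵐ s ∂volume.restrict (Ioo (0:ℝ) 1 ×ˢ Ioo (0:ℝ) 1), 0 < s.1 * s.2 :=
    ae_restrict_of_forall_mem hsq fun s hs => mul_pos hs.1.1 hs.2.1
  have hweight : ∫⁻ s in Ioo 0 1 ×ˢ Ioo 0 1, (ENNReal.ofReal (s.1 * s.2) ^ q⁻¹) ^ (-(q / p)) =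
      ENNReal.ofReal q ^ 2 := by
    have hexp : q⁻¹ * -(q / p) = -p⁻¹ := by
      rw [mul_neg, ← mul_div_assoc, inv_mul_cancel₀ hpq.symm.ne_zero, one_div]
    simp_rw [← ENNReal.rpow_mul, hexp]
    exact lintegral_unitSquare_ofReal_mul_rpow_neg_inv hpq
  refine (lintegral_rpow_le_lintegral_rpow_mul_weight hpq hg.aemeasurable
    (w := fun s => ENNReal.ofReal (s.1 * s.2) ^ q⁻¹) (by fun_prop) ?_ ?_).trans_eq (by rw [hweight])
  · filter_upwards [hpos] with s hs
    exact (ENNReal.rpow_pos (ENNReal.ofReal_pos.2 hs) ENNReal.ofReal_ne_top).ne'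
  · exact ae_of_all _ fun s =>
      ENNReal.rpow_ne_top_of_nonneg (inv_nonneg.2 hpq.symm.nonneg) ENNReal.ofReal_ne_top

theorem lintegral_rpow_unitSquare_average_le {p q : ℝ} (hpq : p.HolderConjugate q)
    {F : ℝ × ℝ → ℝ≥0∞} (hF : Measurable F) :
    ∫⁻ x in Ioi 0 ×ˢ Ioi 0, (∫⁻ s in Ioo 0 1 ×ˢ Ioo 0 1, F (x.1 * s.1, x.2 * s.2)) ^ p ≤
      (ENNReal.ofReal q ^ 2) ^ p * ∫⁻ x in Ioi 0 ×ˢ Ioi 0, F x ^ p := by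
  set C := ENNReal.ofReal q ^ 2
  set I := ∫⁻ x in Ioi 0 ×ˢ Ioi 0, F x ^ p
  have hC_top : C ^ (p / q) ≠ ∞ :=
    ENNReal.rpow_ne_top_of_nonneg (div_nonneg hpq.nonneg hpq.symm.nonneg) (by simp [C])
  have hinner : ∀ s ∈ Ioo (0:ℝ) 1 ×ˢ Ioo (0:ℝ) 1,
      ENNReal.ofReal (s.1 * s.2) ^ q⁻¹ * ∫⁻ x in Ioi 0 ×ˢ Ioi 0, F (x.1 * s.1, x.2 * s.2) ^ p =
        ENNReal.ofReal (s.1 * s.2) ^ (-p⁻¹) * I := fun s hs => by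
    have hρ : ENNReal.ofReal (s.1 * s.2) ≠ 0 := (ENNReal.ofReal_pos.2 (mul_pos hs.1.1 hs.2.1)).ne'
    rw [lintegral_Ioi_prod_Ioi_comp_mul (g := fun t => F t ^ p) (by fun_prop) hs.1.1 hs.2.1,
      ← mul_assoc, ← ENNReal.rpow_neg_one, ← ENNReal.rpow_add _ _ hρ ENNReal.ofReal_ne_top]
    congr 2
    linarith [hpq.inv_add_inv_eq_one]
  calc ∫⁻ x in Ioi 0 ×ˢ Ioi 0, (∫⁻ s in Ioo 0 1 ×ˢ Ioo 0 1, F (x.1 * s.1, x.2 * s.2)) ^ p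
      ≤ ∫⁻ x in Ioi 0 ×ˢ Ioi 0, (∫⁻ s in Ioo 0 1 ×ˢ Ioo 0 1,
          F (x.1 * s.1, x.2 * s.2) ^ p * ENNReal.ofReal (s.1 * s.2) ^ q⁻¹) * C ^ (p / q) :=
        lintegral_mono fun x => lintegral_unitSquare_rpow_le hpq (by fun_prop)
    _ = (∫⁻ s in Ioo 0 1 ×ˢ Ioo 0 1, ENNReal.ofReal (s.1 * s.2) ^ q⁻¹ *
          ∫⁻ x in Ioi 0 ×ˢ Ioi 0, F (x.1 * s.1, x.2 * s.2) ^ p) * C ^ (p / q) := by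
        rw [lintegral_mul_const' _ _ hC_top, lintegral_lintegral_swap (by fun_prop)]
        simp_rw [mul_comm _ (ENNReal.ofReal (_ * _) ^ q⁻¹)]
        congr 1
        refine lintegral_congr fun s => lintegral_const_mul' _ _ ?_
        exact ENNReal.rpow_ne_top_of_nonneg hpq.symm.inv_nonneg ENNReal.ofReal_ne_top
    _ = C * I * C ^ (p / q) := by
        rw [setLIntegral_congr_fun (measurableSet_Ioo.prod measurableSet_Ioo) hinner,
          lintegral_mul_const _ (by fun_prop), lintegral_unitSquare_ofReal_mul_rpow_neg_inv hpq]
    _ = C ^ p * I := by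
        have hp : 1 + p / q = p := by rw [hpq.div_conj_eq_sub_one]; ring
        conv_rhs => rw [← hp, ENNReal.rpow_add_of_nonneg _ _ zero_le_one
          (div_nonneg hpq.nonneg hpq.symm.nonneg), ENNReal.rpow_one]
        rw [mul_right_comm]

theorem eLpNorm_le_mul_eLpNorm_of_lintegral_rpow_le {α ε ε' : Type*} [MeasurableSpace α]
    {μ : Measure α} [ENorm ε] [ENorm ε'] {p : ℝ} (hp : 0 < p) {f : α → ε} {g : α → ε'}
    {C : ℝ≥0∞} (h : ∫⁻ a, ‖g a‖ₑ ^ p ∂μ ≤ C ^ p * ∫⁻ a, ‖f a‖ₑ ^ p ∂μ) :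
    eLpNorm g (ENNReal.ofReal p) μ ≤ C * eLpNorm f (ENNReal.ofReal p) μ := by
  have hp0 : ENNReal.ofReal p ≠ 0 := (ENNReal.ofReal_pos.2 hp).ne'
  rw [eLpNorm_eq_lintegral_rpow_enorm_toReal hp0 ENNReal.ofReal_ne_top,
    eLpNorm_eq_lintegral_rpow_enorm_toReal hp0 ENNReal.ofReal_ne_top,
    ENNReal.toReal_ofReal hp.le]
  calc (∫⁻ a, ‖g a‖ₑ ^ p ∂μ) ^ (1 / p)
      ≤ (C ^ p * ∫⁻ a, ‖f a‖ₑ ^ p ∂μ) ^ (1 / p) := by gcongr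
    _ = C * (∫⁻ a, ‖f a‖ₑ ^ p ∂μ) ^ (1 / p) := by
        rw [ENNReal.mul_rpow_of_nonneg _ _ (by positivity), ← ENNReal.rpow_mul,
          mul_one_div_cancel hp.ne', ENNReal.rpow_one]

theorem enorm_inv_mul_setIntegral_Ioo_prod_Ioo_le {f : ℝ × ℝ → ℝ} (hf : Measurable f) {x₁ x₂ : ℝ}
    (h₁ : 0 < x₁) (h₂ : 0 < x₂) :
    ‖(x₁ * x₂)⁻¹ * ∫ t in Ioo 0 x₁ ×ˢ Ioo 0 x₂, f t‖ₑ ≤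
      ∫⁻ s in Ioo 0 1 ×ˢ Ioo 0 1, ‖f (x₁ * s.1, x₂ * s.2)‖ₑ := by
  have hx : 0 < x₁ * x₂ := mul_pos h₁ h₂
  calc ‖(x₁ * x₂)⁻¹ * ∫ t in Ioo 0 x₁ ×ˢ Ioo 0 x₂, f t‖ₑ
      ≤ ENNReal.ofReal (x₁ * x₂)⁻¹ * ∫⁻ t in Ioo 0 x₁ ×ˢ Ioo 0 x₂, ‖f t‖ₑ := by
        rw [enorm_mul, Real.enorm_eq_ofReal (inv_nonneg.2 hx.le)]
        gcongr
        exact enorm_integral_le_lintegral_enorm _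
    _ = ∫⁻ s in Ioo 0 1 ×ˢ Ioo 0 1, ‖f (x₁ * s.1, x₂ * s.2)‖ₑ := by
        rw [lintegral_Ioo_prod_Ioo_eq_mul_lintegral_unitSquare (by fun_prop) h₁ h₂, ← mul_assoc,
          ← ENNReal.ofReal_mul (inv_nonneg.2 hx.le), inv_mul_cancel₀ hx.ne', ENNReal.ofReal_one,
          one_mul]

theorem rectangular_hardy_two_dim_general (p : ℝ) (hp : 1 < p) (f : ℝ × ℝ → ℝ)
    (hfm : Measurable f) :
    eLpNorm (fun x : ℝ × ℝ => (x.1 * x.2)⁻¹ * ∫ t in Ioo (0:ℝ) x.1 ×ˢ Ioo (0:ℝ) x.2, f t)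
        (ENNReal.ofReal p) (volume.restrict (Ioi 0 ×ˢ Ioi 0)) ≤
      ENNReal.ofReal ((p / (p - 1)) ^ 2) *
        eLpNorm f (ENNReal.ofReal p) (volume.restrict (Ioi 0 ×ˢ Ioi 0)) := by
  have hpq : p.HolderConjugate (p / (p - 1)) := Real.HolderConjugate.conjExponent hp
  have hQ : MeasurableSet (Ioi (0:ℝ) ×ˢ Ioi (0:ℝ)) := measurableSet_Ioi.prod measurableSet_Ioi
  calc _ ≤ eLpNorm (fun x : ℝ × ℝ => ∫⁻ s in Ioo 0 1 ×ˢ Ioo 0 1, ‖f (x.1 * s.1, x.2 * s.2)‖ₑ)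
          (ENNReal.ofReal p) (volume.restrict (Ioi 0 ×ˢ Ioi 0)) :=
        eLpNorm_mono_enorm_ae <| ae_restrict_of_forall_mem hQ fun x hx =>
          enorm_inv_mul_setIntegral_Ioo_prod_Ioo_le hfm hx.1 hx.2
    _ ≤ ENNReal.ofReal (p / (p - 1)) ^ 2 *
          eLpNorm f (ENNReal.ofReal p) (volume.restrict (Ioi 0 ×ˢ Ioi 0)) :=
        eLpNorm_le_mul_eLpNorm_of_lintegral_rpow_le hpq.pos
          (lintegral_rpow_unitSquare_average_le hpq (by fun_prop))
    _ = _ := by rw [ENNReal.ofReal_pow hpq.symm.nonneg]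

/-- Two-dimensional rectangular Hardy inequality on `(0,∞)²` with constant `(p/(p-1))²`. -/
theorem rectangular_hardy_two_dim (p : ℝ) (hp : 1 < p) (f : ℝ × ℝ → ℝ)
    (hfm : Measurable f) (hf0 : ∀ x, 0 ≤ f x) :
    eLpNorm (fun x : ℝ × ℝ => (x.1 * x.2)⁻¹ * ∫ t in Ioo (0:ℝ) x.1 ×ˢ Ioo (0:ℝ) x.2, f t)
        (ENNReal.ofReal p) (volume.restrict (Ioi 0 ×ˢ Ioi 0)) ≤
      ENNReal.ofReal ((p / (p - 1)) ^ 2) *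
        eLpNorm f (ENNReal.ofReal p) (volume.restrict (Ioi 0 ×ˢ Ioi 0)) :=
  rectangular_hardy_two_dim_general p hp f hfm
end

section
/- For 1 < p < ∞, n ≥ 1, and nonnegative measurable f on ℝⁿ, the spherical Hardy operator H f(x) = |B(0,|x|)|⁻¹ ∫_{|y|<|x|} f(y) dy satisfies ‖H f‖_{L^p(ℝⁿ)} ≤ (p/(p-1)) ‖f‖_{L^p(ℝⁿ)}, with a constant independent of the dimension n. -/
/-! Schur test with power weights. For `r = ‖x‖ > 0`, Hölder's inequality with the weight
`‖y‖ ^ (N / q)` (`N` the dimension) bounds `(⨍⁻_{B(0,r)} F) ^ p` by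
`q ^ (p - 1) / |B(0,1)| * r ^ (-(N + N / q)) * ∫_{B(0,r)} F ^ p ‖y‖ ^ (N / q)`.
Integrating in `x` and exchanging the order of integration, the tail integral
`∫_{‖x‖ > ‖y‖} ‖x‖ ^ (-(N + N / q)) dx = q |B(0,1)| ‖y‖ ^ (-(N / q))` (polar coordinates) cancels
the weight exactly and leaves the constant `q ^ p`; the dimension drops out because
`N / (N / q) = q`. -/

open MeasureTheory Set Metric Measure
open scoped ENNReal

theorem lintegral_rpow_le_lintegral_mul_weight {α : Type*} [MeasurableSpace α] {ν : Measure α}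
    {p q : ℝ} (hpq : p.HolderConjugate q) {F w : α → ℝ≥0∞}
    (hF : AEMeasurable F ν) (hw : AEMeasurable w ν) (hw0 : ∀ᵐ y ∂ν, w y ≠ 0)
    (hwt : ∀ᵐ y ∂ν, w y ≠ ∞) :
    (∫⁻ y, F y ∂ν) ^ p ≤ (∫⁻ y, F y ^ p * w y ∂ν) * (∫⁻ y, w y ^ (1 - q) ∂ν) ^ (p - 1) := by
  have hsplit : ∫⁻ y, F y ∂ν = ∫⁻ y, (F y * w y ^ p⁻¹) * w y ^ (-p⁻¹) ∂ν := by
    refine lintegral_congr_ae ?_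
    filter_upwards [hw0, hwt] with y hy0 hyt
    rw [mul_assoc, ← ENNReal.rpow_add _ _ hy0 hyt, add_neg_cancel, ENNReal.rpow_zero, mul_one]
  have hholder := ENNReal.lintegral_mul_le_Lp_mul_Lq ν hpq (hF.mul (hw.pow_const p⁻¹))
    (hw.pow_const (-p⁻¹))
  simp only [Pi.mul_apply, ← hsplit] at hholder
  have hfirst : ∀ y, (F y * w y ^ p⁻¹) ^ p = F y ^ p * w y := fun y => by
    rw [ENNReal.mul_rpow_of_nonneg _ _ hpq.nonneg, ← ENNReal.rpow_mul,
      inv_mul_cancel₀ hpq.ne_zero, ENNReal.rpow_one]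
  have hsecond : ∀ y, (w y ^ (-p⁻¹)) ^ q = w y ^ (1 - q) := fun y => by
    rw [← ENNReal.rpow_mul]
    congr 1
    have := hpq.inv_add_inv_eq_one
    field_simp [hpq.ne_zero, hpq.symm.ne_zero] at this ⊢
    linarith
  simp only [hfirst, hsecond] at hholder
  calc (∫⁻ y, F y ∂ν) ^ p
      ≤ ((∫⁻ y, F y ^ p * w y ∂ν) ^ (1 / p) * (∫⁻ y, w y ^ (1 - q) ∂ν) ^ (1 / q)) ^ p :=
        ENNReal.rpow_le_rpow hholder hpq.nonneg
    _ = (∫⁻ y, F y ^ p * w y ∂ν) * (∫⁻ y, w y ^ (1 - q) ∂ν) ^ (p - 1) := by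
        rw [ENNReal.mul_rpow_of_nonneg _ _ hpq.nonneg, ← ENNReal.rpow_mul, ← ENNReal.rpow_mul,
          one_div_mul_cancel hpq.ne_zero, ENNReal.rpow_one, one_div_mul_eq_div,
          hpq.div_conj_eq_sub_one]

theorem enorm_average_le_laverage {α G : Type*} [MeasurableSpace α] [NormedAddCommGroup G]
    [NormedSpace ℝ G] (ν : Measure α) (f : α → G) : ‖⨍ x, f x ∂ν‖ₑ ≤ ⨍⁻ x, ‖f x‖ₑ ∂ν :=
  enorm_integral_le_lintegral_enorm f

theorem lintegral_mul_setLIntegral_ball_norm_swap {E : Type*} [NormedAddCommGroup E]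
    [MeasurableSpace E] [OpensMeasurableSpace E] {μ : Measure E} [SFinite μ] {a G : E → ℝ≥0∞}
    (ha : Measurable a) (hG : Measurable G) :
    ∫⁻ x, a x * ∫⁻ y in ball 0 ‖x‖, G y ∂μ ∂μ =
      ∫⁻ y, G y * ∫⁻ x in (closedBall 0 ‖y‖)ᶜ, a x ∂μ ∂μ := by
  set Φ : E × E → ℝ≥0∞ := {z | ‖z.2‖ < ‖z.1‖}.indicator fun z => a z.1 * G z.2
  have hΦ : Measurable Φ :=
    ((ha.comp measurable_fst).mul (hG.comp measurable_snd)).indicator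
      (measurableSet_lt measurable_snd.norm measurable_fst.norm)
  calc ∫⁻ x, a x * ∫⁻ y in ball 0 ‖x‖, G y ∂μ ∂μ = ∫⁻ x, ∫⁻ y, Φ (x, y) ∂μ ∂μ := by
        refine lintegral_congr fun x => ?_
        rw [← lintegral_const_mul _ hG, ← lintegral_indicator measurableSet_ball]
        refine lintegral_congr fun y => ?_
        by_cases h : ‖y‖ < ‖x‖ <;> simp [Φ, indicator, h]
    _ = ∫⁻ y, ∫⁻ x, Φ (x, y) ∂μ ∂μ := lintegral_lintegral_swap hΦ.aemeasurable
    _ = ∫⁻ y, G y * ∫⁻ x in (closedBall 0 ‖y‖)ᶜ, a x ∂μ ∂μ := by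
        refine lintegral_congr fun y => ?_
        rw [← lintegral_const_mul _ ha, ← lintegral_indicator measurableSet_closedBall.compl]
        refine lintegral_congr fun x => ?_
        by_cases h : ‖y‖ < ‖x‖ <;> simp [Φ, indicator, h, mul_comm]

local notation "dim" => Module.finrank ℝ

section PolarCoordinates

variable {E : Type*} [NormedAddCommGroup E] [NormedSpace ℝ E] [MeasurableSpace E] [BorelSpace E]
  [FiniteDimensional ℝ E] [Nontrivial E] (μ : Measure E) [μ.IsAddHaarMeasure]

theorem lintegral_fun_norm_addHaar {g : ℝ → ℝ≥0∞} (hg : Measurable g) :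
    ∫⁻ x, g ‖x‖ ∂μ =
      dim E * μ (ball 0 1) * ∫⁻ r in Ioi 0, ENNReal.ofReal (r ^ (dim E - 1)) * g r := by
  have hg' : Measurable fun r : Ioi (0 : ℝ) => g r := hg.comp measurable_subtype_coe
  calc ∫⁻ x, g ‖x‖ ∂μ = ∫⁻ x : ({0}ᶜ : Set E), g ‖x.1‖ ∂μ.comap (↑) := by
        rw [lintegral_subtype_comap (measurableSet_singleton _).compl (fun x => g ‖x‖),
          restrict_compl_singleton]
    _ = ∫⁻ z, g z.2 ∂μ.toSphere.prod (volumeIoiPow (dim E - 1)) := by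
        simpa using (μ.measurePreserving_homeomorphUnitSphereProd.lintegral_comp
          (hg'.comp measurable_snd))
    _ = μ.toSphere univ * ∫⁻ r, g r ∂volumeIoiPow (dim E - 1) := by
        rw [lintegral_prod (fun z : sphere (0 : E) 1 × Ioi (0 : ℝ) => g z.2)
          (hg'.comp measurable_snd).aemeasurable]
        simp only [lintegral_const, mul_comm]
    _ = _ := by
        rw [toSphere_apply_univ, volumeIoiPow, lintegral_withDensity_eq_lintegral_mul _
            (measurable_subtype_coe.pow_const _).ennreal_ofReal hg',
          ← lintegral_subtype_comap measurableSet_Ioi]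
        rfl

theorem setLIntegral_norm_preimage_rpow (s : ℝ) {I : Set ℝ} (hI : MeasurableSet I) :
    ∫⁻ x in norm ⁻¹' I, ENNReal.ofReal (‖x‖ ^ s) ∂μ =
      dim E * μ (ball 0 1) * ∫⁻ r in I ∩ Ioi 0, ENNReal.ofReal (r ^ ((dim E : ℝ) - 1 + s)) := by
  have hg : Measurable (I.indicator fun r : ℝ => ENNReal.ofReal (r ^ s)) :=
    (measurable_id.pow_const s).ennreal_ofReal.indicator hI
  rw [← lintegral_indicator (measurable_norm hI)]
  have hcomp : ∀ x : E, (norm ⁻¹' I).indicator (fun x => ENNReal.ofReal (‖x‖ ^ s)) x =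
      I.indicator (fun r => ENNReal.ofReal (r ^ s)) ‖x‖ := fun x =>
    indicator_comp_right (g := fun r => ENNReal.ofReal (r ^ s)) norm
  rw [lintegral_congr hcomp, lintegral_fun_norm_addHaar μ hg, ← restrict_restrict hI,
    ← lintegral_indicator hI]
  congr 1
  refine setLIntegral_congr_fun measurableSet_Ioi fun r (hr : 0 < r) => ?_
  by_cases hrI : r ∈ I
  · rw [indicator_of_mem hrI, indicator_of_mem hrI, ← ENNReal.ofReal_mul (by positivity),
      ← Real.rpow_natCast, ← Real.rpow_add hr, Nat.cast_sub Module.finrank_pos]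
    norm_num
  · simp [indicator_of_notMem hrI]

theorem setLIntegral_ball_norm_rpow {s R : ℝ} (hs : -(dim E : ℝ) < s) (hR : 0 < R) :
    ∫⁻ x in ball 0 R, ENNReal.ofReal (‖x‖ ^ s) ∂μ =
      dim E * μ (ball 0 1) * ENNReal.ofReal (R ^ (dim E + s) / (dim E + s)) := by
  have hball : ball (0 : E) R = norm ⁻¹' Iio R := by ext; simp
  have hIoo : Iio R ∩ Ioi 0 = Ioo 0 R := by ext; simp [and_comm]
  have hexp : -1 < (dim E : ℝ) - 1 + s := by linarith
  rw [hball, setLIntegral_norm_preimage_rpow μ s measurableSet_Iio, hIoo,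
    ← ofReal_integral_eq_lintegral_ofReal]
  · rw [restrict_congr_set Ioo_ae_eq_Ioc, ← intervalIntegral.integral_of_le hR.le,
      integral_rpow (Or.inl hexp), Real.zero_rpow (by linarith)]
    ring_nf
  · exact (intervalIntegral.intervalIntegrable_rpow' hexp).1.mono_set Ioo_subset_Ioc_self
  · filter_upwards [ae_restrict_mem measurableSet_Ioo] with r hr
    exact Real.rpow_nonneg hr.1.le _

theorem setLIntegral_compl_closedBall_norm_rpow {s R : ℝ} (hs : s < -(dim E : ℝ)) (hR : 0 < R) :
    ∫⁻ x in (closedBall 0 R)ᶜ, ENNReal.ofReal (‖x‖ ^ s) ∂μ =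
      dim E * μ (ball 0 1) * ENNReal.ofReal (R ^ (dim E + s) / -(dim E + s)) := by
  have hcompl : (closedBall (0 : E) R)ᶜ = norm ⁻¹' Ioi R := by ext; simp
  have hexp : (dim E : ℝ) - 1 + s < -1 := by linarith
  rw [hcompl, setLIntegral_norm_preimage_rpow μ s measurableSet_Ioi,
    inter_eq_left.2 (Ioi_subset_Ioi hR.le),
    ← ofReal_integral_eq_lintegral_ofReal (integrableOn_Ioi_rpow_of_lt hexp hR)]
  · rw [integral_Ioi_rpow_of_lt hexp hR, show (dim E : ℝ) - 1 + s + 1 = dim E + s by ring,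
      div_neg, neg_div]
  · filter_upwards [ae_restrict_mem measurableSet_Ioi] with r hr
    exact Real.rpow_nonneg (hR.trans hr).le _

variable {p q : ℝ}

theorem setLAverage_ball_rpow_le (hpq : p.HolderConjugate q) {F : E → ℝ≥0∞} (hF : Measurable F)
    {x : E} (hx : x ≠ 0) :
    (⨍⁻ y in ball 0 ‖x‖, F y ∂μ) ^ p ≤
      ENNReal.ofReal (q ^ (p - 1) / μ.real (ball 0 1) * ‖x‖ ^ (-(dim E + dim E / q) : ℝ)) *
        ∫⁻ y in ball 0 ‖x‖, F y ^ p * ENNReal.ofReal (‖y‖ ^ ((dim E : ℝ) / q)) ∂μ := by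
  set N : ℝ := (dim E : ℝ)
  set r := ‖x‖
  set m := μ.real (ball 0 1)
  set J := ∫⁻ y in ball 0 r, F y ^ p * ENNReal.ofReal (‖y‖ ^ (N / q)) ∂μ
  have hr : 0 < r := norm_pos_iff.2 hx
  have hN : 0 < N := Nat.cast_pos.2 Module.finrank_pos
  have hm : 0 < m := ENNReal.toReal_pos (measure_ball_pos μ 0 one_pos).ne' measure_ball_lt_top.ne
  have hα : 0 < N / q := div_pos hN hpq.symm.pos
  have hne0 : ∀ᵐ y ∂μ.restrict (ball 0 r), y ≠ 0 := ae_restrict_of_ae (μ.ae_ne 0)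
  have hHolder := lintegral_rpow_le_lintegral_mul_weight hpq hF.aemeasurable
    (w := fun y => ENNReal.ofReal (‖y‖ ^ (N / q))) (by fun_prop)
    (hne0.mono fun y hy => by simpa using Real.rpow_pos_of_pos (norm_pos_iff.2 hy) _)
    (ae_of_all _ fun _ => ENNReal.ofReal_ne_top)
  have hweight : ∫⁻ y in ball 0 r, ENNReal.ofReal (‖y‖ ^ (N / q)) ^ (1 - q) ∂μ =
      ENNReal.ofReal (N * m * (r ^ (N / q) / (N / q))) := by
    have hexp : N / q * (1 - q) = -(N / p) := by
      field_simp [hpq.ne_zero, hpq.symm.ne_zero]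
      linarith [hpq.mul_eq_add]
    have hs : -N < -(N / p) := neg_lt_neg (div_lt_self hN hpq.lt)
    rw [setLIntegral_congr_fun_ae measurableSet_ball
      (g := fun y => ENNReal.ofReal (‖y‖ ^ (-(N / p)))) ?pow, setLIntegral_ball_norm_rpow μ hs hr]
    case pow =>
      filter_upwards [μ.ae_ne 0] with y hy _
      rw [ENNReal.ofReal_rpow_of_pos (by positivity), ← Real.rpow_mul (norm_nonneg _), hexp]
    rw [show N + -(N / p) = N / q by rw [div_eq_mul_inv N q, ← hpq.one_sub_inv]; ring,
      ← ofReal_measureReal, ← ENNReal.ofReal_natCast, ← ENNReal.ofReal_mul hN.le,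
      ← ENNReal.ofReal_mul (by positivity)]
  have hball : μ (ball 0 r) = ENNReal.ofReal (r ^ N * m) := by
    rw [addHaar_ball_of_pos μ 0 hr, ENNReal.ofReal_mul (by positivity), ofReal_measureReal,
      Real.rpow_natCast]
  have hreal : (N * m * (r ^ (N / q) / (N / q))) ^ (p - 1) / (r ^ N * m) ^ p =
      q ^ (p - 1) / m * r ^ (-(N + N / q)) := by
    have hq : N * m * (r ^ (N / q) / (N / q)) = q * m * r ^ (N / q) := by
      field_simp [hN.ne', hpq.symm.ne_zero]
    have hexp : -(N + N / q) = N / q * (p - 1) - N * p := by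
      field_simp [hpq.symm.ne_zero]
      linarith [hpq.mul_eq_add]
    have hq0 := hpq.symm.pos
    rw [hq, hexp, Real.rpow_sub hr, Real.mul_rpow (by positivity) (by positivity),
      Real.mul_rpow hq0.le hm.le, Real.mul_rpow (by positivity) hm.le,
      ← Real.rpow_mul hr.le, ← Real.rpow_mul hr.le, Real.rpow_sub_one hm.ne']
    field_simp
  calc (⨍⁻ y in ball 0 r, F y ∂μ) ^ p
      = (∫⁻ y in ball 0 r, F y ∂μ) ^ p / ENNReal.ofReal (r ^ N * m) ^ p := by
        rw [setLAverage_eq, hball, ENNReal.div_rpow_of_nonneg _ _ hpq.nonneg]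
    _ ≤ J * ENNReal.ofReal (N * m * (r ^ (N / q) / (N / q))) ^ (p - 1) /
          ENNReal.ofReal (r ^ N * m) ^ p := by
        gcongr
        rwa [← hweight]
    _ = ENNReal.ofReal (q ^ (p - 1) / m * r ^ (-(N + N / q))) * J := by
        rw [← hreal, ENNReal.ofReal_div_of_pos (by positivity),
          ENNReal.ofReal_rpow_of_nonneg (by positivity) hpq.sub_one_pos.le,
          ENNReal.ofReal_rpow_of_nonneg (by positivity) hpq.nonneg, mul_div_assoc, mul_comm]

theorem setLIntegral_compl_closedBall_hardy_weight (hpq : p.HolderConjugate q) {y : E}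
    (hy : y ≠ 0) :
    ∫⁻ x in (closedBall 0 ‖y‖)ᶜ,
        ENNReal.ofReal (q ^ (p - 1) / μ.real (ball 0 1) * ‖x‖ ^ (-(dim E + dim E / q) : ℝ)) ∂μ =
      ENNReal.ofReal (q ^ p * ‖y‖ ^ (-(dim E / q) : ℝ)) := by
  set N : ℝ := (dim E : ℝ)
  have hN : 0 < N := Nat.cast_pos.2 Module.finrank_pos
  have hm : 0 < μ.real (ball 0 1) :=
    ENNReal.toReal_pos (measure_ball_pos μ 0 one_pos).ne' measure_ball_lt_top.ne
  have hq := hpq.symm.pos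
  have hs : -(N + N / q) < -N := by have := div_pos hN hq; linarith
  simp_rw [ENNReal.ofReal_mul (div_pos (Real.rpow_pos_of_pos hq _) hm).le]
  rw [lintegral_const_mul' _ _ ENNReal.ofReal_ne_top,
    setLIntegral_compl_closedBall_norm_rpow μ hs (norm_pos_iff.2 hy), ← ofReal_measureReal,
    ← ENNReal.ofReal_natCast, ← ENNReal.ofReal_mul hN.le, ← ENNReal.ofReal_mul (by positivity),
    ← ENNReal.ofReal_mul (by positivity)]
  congr 1
  rw [show N + -(N + N / q) = -(N / q) by ring, neg_neg, Real.rpow_sub_one hq.ne']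
  field_simp

end PolarCoordinates

section HardyInequality

variable {E : Type*} [NormedAddCommGroup E] [NormedSpace ℝ E] [MeasurableSpace E] [BorelSpace E]
  [FiniteDimensional ℝ E] (μ : Measure E) [μ.IsAddHaarMeasure] {p q : ℝ}

theorem lintegral_setLAverage_ball_rpow_le (hpq : p.HolderConjugate q) {F : E → ℝ≥0∞}
    (hF : Measurable F) :
    ∫⁻ x, (⨍⁻ y in ball 0 ‖x‖, F y ∂μ) ^ p ∂μ ≤ ENNReal.ofReal q ^ p * ∫⁻ x, F x ^ p ∂μ := by
  rcases subsingleton_or_nontrivial E with hE | hE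
  · simp [Subsingleton.elim _ (0 : E), hpq.pos]
  have hne0 : ∀ᵐ y ∂μ, y ≠ 0 := μ.ae_ne 0
  calc ∫⁻ x, (⨍⁻ y in ball 0 ‖x‖, F y ∂μ) ^ p ∂μ
      ≤ ∫⁻ x, ENNReal.ofReal
            (q ^ (p - 1) / μ.real (ball 0 1) * ‖x‖ ^ (-(dim E + dim E / q) : ℝ)) *
          ∫⁻ y in ball 0 ‖x‖, F y ^ p * ENNReal.ofReal (‖y‖ ^ ((dim E : ℝ) / q)) ∂μ ∂μ :=
        lintegral_mono_ae (hne0.mono fun x hx => setLAverage_ball_rpow_le μ hpq hF hx)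
    _ = ∫⁻ y, F y ^ p * ENNReal.ofReal (‖y‖ ^ ((dim E : ℝ) / q)) *
          ENNReal.ofReal (q ^ p * ‖y‖ ^ (-(dim E / q) : ℝ)) ∂μ := by
        rw [lintegral_mul_setLIntegral_ball_norm_swap (by fun_prop) (by fun_prop)]
        refine lintegral_congr_ae (hne0.mono fun y hy => ?_)
        dsimp only
        rw [setLIntegral_compl_closedBall_hardy_weight μ hpq hy]
    _ = ∫⁻ y, ENNReal.ofReal q ^ p * F y ^ p ∂μ := by
        refine lintegral_congr_ae (hne0.mono fun y hy => ?_)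
        have hy : 0 < ‖y‖ := norm_pos_iff.2 hy
        dsimp only
        rw [mul_assoc, ← ENNReal.ofReal_mul (by positivity), mul_left_comm, Real.rpow_neg hy.le,
          mul_inv_cancel₀ (Real.rpow_pos_of_pos hy _).ne', mul_one,
          ← ENNReal.ofReal_rpow_of_nonneg hpq.symm.nonneg hpq.nonneg, mul_comm]
    _ = ENNReal.ofReal q ^ p * ∫⁻ x, F x ^ p ∂μ := lintegral_const_mul _ (hF.pow_const p)

theorem eLpNorm_setLAverage_ball_le (hpq : p.HolderConjugate q) {F : E → ℝ≥0∞}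
    (hF : Measurable F) :
    eLpNorm (fun x => ⨍⁻ y in ball 0 ‖x‖, F y ∂μ) (ENNReal.ofReal p) μ ≤
      ENNReal.ofReal q * eLpNorm F (ENNReal.ofReal p) μ := by
  have hp : ENNReal.ofReal p ≠ 0 := ENNReal.ofReal_ne_zero_iff.2 hpq.pos
  simp only [eLpNorm_eq_lintegral_rpow_enorm_toReal hp ENNReal.ofReal_ne_top,
    ENNReal.toReal_ofReal hpq.nonneg, enorm_eq_self]
  calc (∫⁻ x, (⨍⁻ y in ball 0 ‖x‖, F y ∂μ) ^ p ∂μ) ^ (1 / p)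
      ≤ (ENNReal.ofReal q ^ p * ∫⁻ x, F x ^ p ∂μ) ^ (1 / p) :=
        ENNReal.rpow_le_rpow (lintegral_setLAverage_ball_rpow_le μ hpq hF) hpq.one_div_nonneg
    _ = ENNReal.ofReal q * (∫⁻ x, F x ^ p ∂μ) ^ (1 / p) := by
        rw [ENNReal.mul_rpow_of_nonneg _ _ hpq.one_div_nonneg, ← ENNReal.rpow_mul,
          mul_one_div_cancel hpq.ne_zero, ENNReal.rpow_one]

end HardyInequality

theorem spherical_hardy_general (n : ℕ) (p : ℝ) (hp : 1 < p)
    (f : EuclideanSpace ℝ (Fin n) → ℝ) (hfm : Measurable f) :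
    eLpNorm (fun x : EuclideanSpace ℝ (Fin n) =>
        (volume (Metric.ball (0 : EuclideanSpace ℝ (Fin n)) ‖x‖)).toReal⁻¹ *
          ∫ y in Metric.ball (0 : EuclideanSpace ℝ (Fin n)) ‖x‖, f y)
        (ENNReal.ofReal p) volume ≤
      ENNReal.ofReal (p / (p - 1)) * eLpNorm f (ENNReal.ofReal p) volume := by
  have hpq : p.HolderConjugate (p / (p - 1)) := (Real.holderConjugate_iff_eq_conjExponent hp).2 rfl
  calc _ = eLpNorm (fun x => ⨍ y in ball 0 ‖x‖, f y) (ENNReal.ofReal p) volume := by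
        simp_rw [setAverage_eq, smul_eq_mul]
        rfl
    _ ≤ eLpNorm (fun x => ⨍⁻ y in ball 0 ‖x‖, ‖f y‖ₑ ∂volume) (ENNReal.ofReal p) volume :=
        eLpNorm_mono_enorm fun x => enorm_average_le_laverage _ _
    _ ≤ ENNReal.ofReal (p / (p - 1)) * eLpNorm (‖f ·‖ₑ) (ENNReal.ofReal p) volume :=
        eLpNorm_setLAverage_ball_le volume hpq hfm.enorm
    _ = _ := by rw [eLpNorm_enorm]

/-- Spherical Hardy inequality on `ℝⁿ`: the averaging operator over balls centered at the
origin is bounded on `L^p(ℝⁿ)` with norm constant `p/(p-1)`, independent of the dimension. -/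
theorem spherical_hardy (n : ℕ) (hn : 1 ≤ n) (p : ℝ) (hp : 1 < p)
    (f : EuclideanSpace ℝ (Fin n) → ℝ) (hfm : Measurable f) (hf0 : ∀ x, 0 ≤ f x) :
    eLpNorm (fun x : EuclideanSpace ℝ (Fin n) =>
        (volume (Metric.ball (0 : EuclideanSpace ℝ (Fin n)) ‖x‖)).toReal⁻¹ *
          ∫ y in Metric.ball (0 : EuclideanSpace ℝ (Fin n)) ‖x‖, f y)
        (ENNReal.ofReal p) volume ≤
      ENNReal.ofReal (p / (p - 1)) * eLpNorm f (ENNReal.ofReal p) volume :=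
  spherical_hardy_general n p hp f hfm
end

section
/- Let 1 ≤ p < ∞ and let φ : [0,1]² → [0,∞) be measurable with C := ∫₀¹∫₀¹ t₁^{-Q₁/p} t₂^{-Q₂/p} φ(t₁,t₂) dt₁ dt₂ < ∞, where Qᵢ = 2nᵢ+2. Then for every f ∈ L^p(ℝ^{2n₁+1} × ℝ^{2n₂+1}), the weighted Hardy operator P_{φ,2}f(x₁,x₂) = ∫₀¹∫₀¹ f(δ_{t₁}x₁, δ_{t₂}x₂) φ(t₁,t₂) dt₁ dt₂ satisfies ‖P_{φ,2}f‖_{L^p} ≤ C ‖f‖_{L^p}. -/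
/-!
Minkowski's integral inequality moves the `L^p` norm inside the `t`-integral:
`‖P_{φ,2} f‖_p ≤ ∫ ‖f ∘ δ_t‖_p φ(t) dt`, where `δ_t = (δ_{t₁}, δ_{t₂})`. For `t₁, t₂ > 0` the
product dilation is linear with determinant `t₁^{Q₁} t₂^{Q₂}`, so
`‖f ∘ δ_t‖_p = t₁^{-Q₁/p} t₂^{-Q₂/p} ‖f‖_p`, and integrating against `φ` yields the constant `C`.
-/

open MeasureTheory Set
open scoped ENNReal

/-- The Heisenberg group `ℍⁿ`, modelled as `ℝ^{2n} × ℝ`. -/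
abbrev Heis (n : ℕ) : Type := (Fin (2 * n) → ℝ) × ℝ

/-- The Heisenberg (Korányi) norm `|x|_h = ((∑ xᵢ²)² + t²)^{1/4}`. -/
noncomputable def hnorm {n : ℕ} (x : Heis n) : ℝ :=
  ((∑ i, x.1 i ^ 2) ^ 2 + x.2 ^ 2) ^ ((1 : ℝ) / 4)

/-- The Heisenberg dilation `δ_r(x, t) = (r x, r² t)`. -/
def hdil {n : ℕ} (r : ℝ) (x : Heis n) : Heis n :=
  (fun i => r * x.1 i, r ^ 2 * x.2)

theorem ENNReal.le_rpow_of_le_rpow_mul {p q : ℝ} (hpq : p.HolderConjugate q) {A I : ℝ≥0∞}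
    (hA : A ≠ ∞) (h : A ≤ A ^ (1 / q) * I) : A ≤ I ^ p := by
  rcases eq_or_ne A 0 with rfl | hA0
  · exact zero_le
  have hAq0 : A ^ (1 / q) ≠ 0 := (ENNReal.rpow_pos (pos_iff_ne_zero.2 hA0) hA).ne'
  have hAqtop : A ^ (1 / q) ≠ ∞ := ENNReal.rpow_ne_top_of_nonneg hpq.symm.one_div_nonneg hA
  have hsplit : A = A ^ (1 / p) * A ^ (1 / q) := by
    rw [← ENNReal.rpow_add _ _ hA0 hA, one_div, one_div, hpq.inv_add_inv_eq_one,
      ENNReal.rpow_one]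
  have hroot : A ^ (1 / p) ≤ I := by
    rw [← ENNReal.mul_le_mul_iff_left hAq0 hAqtop, ← hsplit, mul_comm]
    exact h
  calc A = (A ^ (1 / p)) ^ p := by rw [one_div, ENNReal.rpow_inv_rpow hpq.ne_zero]
    _ ≤ I ^ p := ENNReal.rpow_le_rpow hroot hpq.nonneg

section Minkowski

variable {α β : Type*} [MeasurableSpace α] [MeasurableSpace β] {μ : Measure α} {ν : Measure β}

theorem lintegral_mul_lintegral_le [SFinite μ] [SFinite ν] {p q : ℝ} (hpq : p.HolderConjugate q)
    {h : α → ℝ≥0∞} (hh : Measurable h) {F : α × β → ℝ≥0∞} (hF : Measurable F) :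
    ∫⁻ x, h x * ∫⁻ t, F (x, t) ∂ν ∂μ ≤
      (∫⁻ x, h x ^ q ∂μ) ^ (1 / q) * ∫⁻ t, (∫⁻ x, F (x, t) ^ p ∂μ) ^ (1 / p) ∂ν :=
  calc ∫⁻ x, h x * ∫⁻ t, F (x, t) ∂ν ∂μ
      = ∫⁻ x, ∫⁻ t, h x * F (x, t) ∂ν ∂μ :=
        lintegral_congr fun _ => (lintegral_const_mul _ (hF.comp measurable_prodMk_left)).symm
    _ = ∫⁻ t, ∫⁻ x, h x * F (x, t) ∂μ ∂ν :=
        lintegral_lintegral_swap ((hh.comp measurable_fst).mul hF).aemeasurable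
    _ ≤ ∫⁻ t, (∫⁻ x, h x ^ q ∂μ) ^ (1 / q) * (∫⁻ x, F (x, t) ^ p ∂μ) ^ (1 / p) ∂ν :=
        lintegral_mono fun _ => ENNReal.lintegral_mul_le_Lp_mul_Lq μ hpq.symm hh.aemeasurable
          (hF.comp measurable_prodMk_right).aemeasurable
    _ = (∫⁻ x, h x ^ q ∂μ) ^ (1 / q) * ∫⁻ t, (∫⁻ x, F (x, t) ^ p ∂μ) ^ (1 / p) ∂ν :=
        lintegral_const_mul _ ((hF.pow_const p).lintegral_prod_left'.pow_const _)

theorem lintegral_rpow_le_of_le_lintegral [SFinite μ] [SFinite ν] {p : ℝ} (hp : 1 < p)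
    {F : α × β → ℝ≥0∞} (hF : Measurable F) {H : α → ℝ≥0∞} (hH : Measurable H)
    (hHF : ∀ x, H x ≤ ∫⁻ t, F (x, t) ∂ν) (hfin : ∫⁻ x, H x ^ p ∂μ ≠ ∞) :
    ∫⁻ x, H x ^ p ∂μ ≤ (∫⁻ t, (∫⁻ x, F (x, t) ^ p ∂μ) ^ (1 / p) ∂ν) ^ p := by
  have hpq := Real.HolderConjugate.conjExponent hp
  refine ENNReal.le_rpow_of_le_rpow_mul hpq hfin ?_
  have hpow : ∀ x, (H x ^ (p - 1)) ^ p.conjExponent = H x ^ p := fun x => by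
    rw [← ENNReal.rpow_mul, hpq.sub_one_mul_conj]
  calc ∫⁻ x, H x ^ p ∂μ = ∫⁻ x, H x ^ (p - 1) * H x ∂μ := by
        refine lintegral_congr fun x => ?_
        have := ENNReal.rpow_add_of_nonneg (x := H x) (p - 1) 1 (by linarith) zero_le_one
        rwa [sub_add_cancel, ENNReal.rpow_one] at this
    _ ≤ ∫⁻ x, H x ^ (p - 1) * ∫⁻ t, F (x, t) ∂ν ∂μ := by gcongr with x; exact hHF x
    _ ≤ (∫⁻ x, (H x ^ (p - 1)) ^ p.conjExponent ∂μ) ^ (1 / p.conjExponent) *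
          ∫⁻ t, (∫⁻ x, F (x, t) ^ p ∂μ) ^ (1 / p) ∂ν :=
        lintegral_mul_lintegral_le hpq (hH.pow_const _) hF
    _ = _ := by simp only [hpow]

theorem ENNReal.iSup_min_natCast_rpow {p : ℝ} (hp : 0 < p) (a : ℝ≥0∞) :
    ⨆ n : ℕ, min a n ^ p = a ^ p := by
  calc ⨆ n : ℕ, min a n ^ p = ENNReal.orderIsoRpow p hp (⨆ n : ℕ, min a n) :=
        ((ENNReal.orderIsoRpow p hp).map_iSup _).symm
    _ = a ^ p := by rw [← inf_iSup_eq, ENNReal.iSup_natCast, inf_top_eq]; rfl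

/-- **Minkowski's integral inequality** for nonnegative functions. Hölder gives
`∫ G^p ≤ (∫ G^p)^{1/q} I` for `G = ∫ F(·, t) dν`; to cancel the factor, `G` is first truncated to
`min G n` on sets of finite measure. -/
theorem lintegral_lintegral_rpow_le [SigmaFinite μ] [SFinite ν] {p : ℝ} (hp : 1 ≤ p)
    {F : α × β → ℝ≥0∞} (hF : Measurable F) :
    (∫⁻ x, (∫⁻ t, F (x, t) ∂ν) ^ p ∂μ) ^ (1 / p) ≤
      ∫⁻ t, (∫⁻ x, F (x, t) ^ p ∂μ) ^ (1 / p) ∂ν := by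
  rcases hp.eq_or_lt with rfl | hp1
  · simpa using (lintegral_lintegral_swap (f := fun x t => F (x, t)) hF.aemeasurable).le
  have hp0 : 0 < p := zero_lt_one.trans hp1
  set I := ∫⁻ t, (∫⁻ x, F (x, t) ^ p ∂μ) ^ (1 / p) ∂ν
  have hG : Measurable fun x => ∫⁻ t, F (x, t) ∂ν := hF.lintegral_prod_right'
  suffices h : ∫⁻ x, (∫⁻ t, F (x, t) ∂ν) ^ p ∂μ ≤ I ^ p by
    calc _ ≤ (I ^ p) ^ (1 / p) := ENNReal.rpow_le_rpow h (by positivity)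
      _ = I := by rw [one_div, ENNReal.rpow_rpow_inv hp0.ne']
  refine lintegral_le_of_forall_fin_meas_le _ fun s _ hμs => ?_
  have htrunc : ∀ n : ℕ, ∫⁻ x in s, min (∫⁻ t, F (x, t) ∂ν) n ^ p ∂μ ≤ I ^ p := fun n => by
    have hfin : ∫⁻ x in s, min (∫⁻ t, F (x, t) ∂ν) n ^ p ∂μ ≠ ∞ := by
      refine ne_top_of_le_ne_top ?_ (setLIntegral_mono measurable_const fun x _ =>
        ENNReal.rpow_le_rpow (min_le_right _ (n : ℝ≥0∞)) hp0.le)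
      rw [setLIntegral_const]
      exact ENNReal.mul_ne_top (by simp [hp0.le]) hμs
    calc _ ≤ (∫⁻ t, (∫⁻ x in s, F (x, t) ^ p ∂μ) ^ (1 / p) ∂ν) ^ p :=
          lintegral_rpow_le_of_le_lintegral hp1 hF (hG.min measurable_const)
            (fun _ => min_le_left _ _) hfin
      _ ≤ I ^ p := by
          gcongr ?_ ^ p
          exact lintegral_mono fun t => ENNReal.rpow_le_rpow
            (lintegral_mono' Measure.restrict_le_self le_rfl) (by positivity)
  calc ∫⁻ x in s, (∫⁻ t, F (x, t) ∂ν) ^ p ∂μ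
      = ∫⁻ x in s, ⨆ n : ℕ, min (∫⁻ t, F (x, t) ∂ν) n ^ p ∂μ := by
        simp only [ENNReal.iSup_min_natCast_rpow hp0]
    _ = ⨆ n : ℕ, ∫⁻ x in s, min (∫⁻ t, F (x, t) ∂ν) n ^ p ∂μ :=
        lintegral_iSup (fun n => (hG.min measurable_const).pow_const p)
          fun m n hmn x => ENNReal.rpow_le_rpow (min_le_min_left _ (by exact_mod_cast hmn)) hp0.le
    _ ≤ I ^ p := iSup_le htrunc

theorem eLpNorm_lintegral_le [SigmaFinite μ] [SFinite ν] {p : ℝ≥0∞} (hp : 1 ≤ p) (hp' : p ≠ ∞)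
    {F : α × β → ℝ≥0∞} (hF : AEMeasurable F (μ.prod ν)) :
    eLpNorm (fun x => ∫⁻ t, F (x, t) ∂ν) p μ ≤ ∫⁻ t, eLpNorm (fun x => F (x, t)) p μ ∂ν := by
  have hx : (fun x => ∫⁻ t, F (x, t) ∂ν) =ᵐ[μ] fun x => ∫⁻ t, hF.mk F (x, t) ∂ν :=
    (Measure.ae_ae_of_ae_prod hF.ae_eq_mk).mono fun _ hx => lintegral_congr_ae hx
  have ht : ∀ᵐ t ∂ν, (fun x => F (x, t)) =ᵐ[μ] fun x => hF.mk F (x, t) :=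
    Measure.ae_ae_of_ae_prod
      (Measure.measurePreserving_swap.quasiMeasurePreserving.ae_eq hF.ae_eq_mk)
  rw [eLpNorm_congr_ae hx, lintegral_congr_ae (ht.mono fun _ h => eLpNorm_congr_ae h)]
  simp only [eLpNorm_eq_lintegral_rpow_enorm_toReal (zero_lt_one.trans_le hp).ne' hp',
    enorm_eq_self]
  exact lintegral_lintegral_rpow_le (by simpa using ENNReal.toReal_mono hp' hp)
    hF.measurable_mk

/-- **Minkowski's integral inequality**. -/
theorem eLpNorm_integral_le {E : Type*} [NormedAddCommGroup E] [NormedSpace ℝ E] [SigmaFinite μ]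
    [SFinite ν] {p : ℝ≥0∞} (hp : 1 ≤ p) (hp' : p ≠ ∞) {F : α × β → E}
    (hF : AEStronglyMeasurable F (μ.prod ν)) :
    eLpNorm (fun x => ∫ t, F (x, t) ∂ν) p μ ≤ ∫⁻ t, eLpNorm (fun x => F (x, t)) p μ ∂ν := by
  have hpointwise : ∀ x, ‖∫ t, F (x, t) ∂ν‖ₑ ≤ ‖∫⁻ t, ‖F (x, t)‖ₑ ∂ν‖ₑ := fun x => by
    rw [enorm_eq_self]
    exact enorm_integral_le_lintegral_enorm _
  calc eLpNorm (fun x => ∫ t, F (x, t) ∂ν) p μ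
      ≤ eLpNorm (fun x => ∫⁻ t, ‖F (x, t)‖ₑ ∂ν) p μ := eLpNorm_mono_enorm hpointwise
    _ ≤ ∫⁻ t, eLpNorm (fun x => ‖F (x, t)‖ₑ) p μ ∂ν :=
        eLpNorm_lintegral_le (F := fun z => ‖F z‖ₑ) hp hp' hF.enorm
    _ = ∫⁻ t, eLpNorm (fun x => F (x, t)) p μ ∂ν := by simp only [eLpNorm_enorm]

end Minkowski

theorem quasiMeasurePreserving_prod_of_ae {α β γ : Type*} [MeasurableSpace α] [MeasurableSpace β]
    [MeasurableSpace γ] {μ : Measure α} {ν : Measure β} {μ' : Measure γ} [SFinite μ] [SFinite ν]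
    {D : α × β → γ} (hD : Measurable D)
    (h : ∀ᵐ t ∂ν, Measure.map (fun x => D (x, t)) μ ≪ μ') :
    Measure.QuasiMeasurePreserving D (μ.prod ν) μ' := by
  refine ⟨hD, Measure.AbsolutelyContinuous.mk fun s hs hs0 => ?_⟩
  rw [Measure.map_apply hD hs, Measure.prod_apply_symm (hD hs)]
  refine (lintegral_congr_ae (h.mono fun t ht => ?_)).trans lintegral_zero
  have := ht hs0
  rwa [Measure.map_apply (f := fun x => D (x, t)) (hD.comp measurable_prodMk_right) hs] at this

theorem ae_fst_ne_zero_and_snd_ne_zero : ∀ᵐ t : ℝ × ℝ, t.1 ≠ 0 ∧ t.2 ≠ 0 := by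
  rw [Measure.volume_eq_prod]
  exact (Measure.quasiMeasurePreserving_fst.ae (Measure.ae_ne volume 0)).and
    (Measure.quasiMeasurePreserving_snd.ae (Measure.ae_ne volume 0))

theorem eLpNorm_comp_linearMap {E ε : Type*} [NormedAddCommGroup E] [NormedSpace ℝ E]
    [MeasurableSpace E] [BorelSpace E] [FiniteDimensional ℝ E] (μ : Measure E)
    [μ.IsAddHaarMeasure] [TopologicalSpace ε] [ContinuousENorm ε] {L : E →ₗ[ℝ] E}
    (hL : L.det ≠ 0) {p : ℝ≥0∞} (hp : p ≠ ∞) {f : E → ε} (hf : AEStronglyMeasurable f μ) :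
    eLpNorm (f ∘ L) p μ = ENNReal.ofReal |L.det⁻¹| ^ (1 / p).toReal * eLpNorm f p μ := by
  have hmap := Measure.map_linearMap_addHaar_eq_smul_addHaar μ hL
  rw [← eLpNorm_map_measure (by rw [hmap]; exact hf.smul_measure _)
    L.continuous_of_finiteDimensional.aemeasurable, hmap, eLpNorm_smul_measure_of_ne_top hp,
    smul_eq_mul]

-- Instance search does not find these through the nested products.
instance (n : ℕ) : (volume : Measure (Heis n)).IsAddHaarMeasure :=
  Measure.prod.instIsAddHaarMeasure _ _

instance (n₁ n₂ : ℕ) : (volume : Measure (Heis n₁ × Heis n₂)).IsAddHaarMeasure :=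
  Measure.prod.instIsAddHaarMeasure _ _

/-- `hdil r` bundled as a linear map; the two are definitionally equal. -/
def hdilLinearMap (n : ℕ) (r : ℝ) : Heis n →ₗ[ℝ] Heis n :=
  (r • LinearMap.id).prodMap ((r ^ 2) • LinearMap.id)

theorem det_hdilLinearMap (n : ℕ) (r : ℝ) : (hdilLinearMap n r).det = r ^ (2 * n + 2) := by
  simp only [hdilLinearMap, LinearMap.det_prodMap, LinearMap.det_smul, LinearMap.det_id,
    Module.finrank_fintype_fun_eq_card, Fintype.card_fin, Module.finrank_self]
  ring

def hdilProd (n₁ n₂ : ℕ) (t : ℝ × ℝ) : (Heis n₁ × Heis n₂) →ₗ[ℝ] Heis n₁ × Heis n₂ :=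
  (hdilLinearMap n₁ t.1).prodMap (hdilLinearMap n₂ t.2)

theorem det_hdilProd (n₁ n₂ : ℕ) (t : ℝ × ℝ) :
    (hdilProd n₁ n₂ t).det = t.1 ^ (2 * n₁ + 2) * t.2 ^ (2 * n₂ + 2) := by
  rw [hdilProd, LinearMap.det_prodMap, det_hdilLinearMap, det_hdilLinearMap]

theorem det_hdilProd_ne_zero {n₁ n₂ : ℕ} {t : ℝ × ℝ} (ht : t.1 ≠ 0 ∧ t.2 ≠ 0) :
    (hdilProd n₁ n₂ t).det ≠ 0 := by
  rw [det_hdilProd]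
  exact mul_ne_zero (pow_ne_zero _ ht.1) (pow_ne_zero _ ht.2)

theorem measurable_hdil_prod {n₁ n₂ : ℕ} :
    Measurable fun z : (Heis n₁ × Heis n₂) × (ℝ × ℝ) => (hdil z.2.1 z.1.1, hdil z.2.2 z.1.2) := by
  unfold hdil; fun_prop

theorem quasiMeasurePreserving_hdil_prod {n₁ n₂ : ℕ} {ν : Measure (ℝ × ℝ)} [SFinite ν]
    (hν : ∀ᵐ t ∂ν, t.1 ≠ 0 ∧ t.2 ≠ 0) :
    Measure.QuasiMeasurePreserving
      (fun z : (Heis n₁ × Heis n₂) × (ℝ × ℝ) => (hdil z.2.1 z.1.1, hdil z.2.2 z.1.2))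
      (volume.prod ν) volume := by
  refine quasiMeasurePreserving_prod_of_ae measurable_hdil_prod (hν.mono fun t ht => ?_)
  change Measure.map (hdilProd n₁ n₂ t) volume ≪ volume
  rw [Measure.map_linearMap_addHaar_eq_smul_addHaar volume (det_hdilProd_ne_zero ht)]
  exact Measure.smul_absolutelyContinuous

theorem eLpNorm_comp_hdil_prod {E : Type*} [NormedAddCommGroup E] {n₁ n₂ : ℕ} {p : ℝ} (hp : 0 < p)
    {t : ℝ × ℝ} (ht : 0 < t.1 ∧ 0 < t.2) {f : Heis n₁ × Heis n₂ → E}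
    (hf : AEStronglyMeasurable f volume) :
    eLpNorm (fun x : Heis n₁ × Heis n₂ => f (hdil t.1 x.1, hdil t.2 x.2)) (ENNReal.ofReal p)
        volume =
      ENNReal.ofReal (t.1 ^ (-((2 * n₁ + 2 : ℝ) / p)) * t.2 ^ (-((2 * n₂ + 2 : ℝ) / p))) *
        eLpNorm f (ENNReal.ofReal p) volume := by
  have hroot : ∀ {s : ℝ}, 0 < s → ∀ k : ℕ, ((s ^ k)⁻¹) ^ (1 / p) = s ^ (-((k : ℝ) / p)) :=
    fun hs k => by
      rw [← Real.rpow_natCast, ← Real.rpow_neg hs.le, ← Real.rpow_mul hs.le, neg_mul, mul_one_div]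
  have hdet := det_hdilProd_ne_zero (n₁ := n₁) (n₂ := n₂) ⟨ht.1.ne', ht.2.ne'⟩
  change eLpNorm (f ∘ hdilProd n₁ n₂ t) _ _ = _
  obtain ⟨h₁, h₂⟩ := ht
  rw [eLpNorm_comp_linearMap volume hdet ENNReal.ofReal_ne_top hf, det_hdilProd,
    ENNReal.toReal_div, ENNReal.toReal_one, ENNReal.toReal_ofReal hp.le,
    ENNReal.ofReal_rpow_of_nonneg (abs_nonneg _) (by positivity),
    abs_of_pos (by positivity), mul_inv, Real.mul_rpow (by positivity) (by positivity),
    hroot h₁, hroot h₂]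
  push_cast
  rfl

theorem eLpNorm_comp_hdil_prod_mul {n₁ n₂ : ℕ} {p : ℝ} (hp : 0 < p) {t : ℝ × ℝ}
    (ht : 0 < t.1 ∧ 0 < t.2) {c : ℝ} (hc : 0 ≤ c) {f : Heis n₁ × Heis n₂ → ℝ}
    (hf : AEStronglyMeasurable f volume) :
    eLpNorm (fun x : Heis n₁ × Heis n₂ => f (hdil t.1 x.1, hdil t.2 x.2) * c)
        (ENNReal.ofReal p) volume =
      ENNReal.ofReal (t.1 ^ (-((2 * n₁ + 2 : ℝ) / p)) * t.2 ^ (-((2 * n₂ + 2 : ℝ) / p)) * c) *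
        eLpNorm f (ENNReal.ofReal p) volume := by
  have hsmul : (fun x : Heis n₁ × Heis n₂ => f (hdil t.1 x.1, hdil t.2 x.2) * c) =
      c • fun x => f (hdil t.1 x.1, hdil t.2 x.2) := funext fun _ => mul_comm _ _
  rw [hsmul, eLpNorm_const_smul, eLpNorm_comp_hdil_prod hp ht hf, Real.enorm_of_nonneg hc,
    ← mul_assoc, ← ENNReal.ofReal_mul hc, mul_comm c]

theorem ae_pos_restrict_unitSquare :
    ∀ᵐ t ∂(volume.restrict (Icc (0:ℝ) 1 ×ˢ Icc (0:ℝ) 1)), 0 < t.1 ∧ 0 < t.2 := by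
  filter_upwards [ae_restrict_mem (measurableSet_Icc.prod measurableSet_Icc),
    ae_restrict_of_ae ae_fst_ne_zero_and_snd_ne_zero] with t ht hne
  exact ⟨ht.1.1.lt_of_ne' hne.1, ht.2.1.lt_of_ne' hne.2⟩

/-- Sufficiency for the product weighted Hardy operator on the Heisenberg group:
if `C = ∫₀¹∫₀¹ t₁^{-Q₁/p} t₂^{-Q₂/p} φ(t₁,t₂) dt₁ dt₂ < ∞`, then
`‖P_{φ,2} f‖_p ≤ C ‖f‖_p`. -/
theorem heis_weighted_hardy_upper (n₁ n₂ : ℕ) (p : ℝ) (hp : 1 ≤ p)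
    (φ : ℝ × ℝ → ℝ) (hφm : Measurable φ) (hφ0 : ∀ t, 0 ≤ φ t)
    (hC : IntegrableOn
      (fun t : ℝ × ℝ => t.1 ^ (-((2 * n₁ + 2 : ℝ) / p)) * t.2 ^ (-((2 * n₂ + 2 : ℝ) / p)) * φ t)
      (Icc 0 1 ×ˢ Icc 0 1))
    (f : Heis n₁ × Heis n₂ → ℝ) (hf : MemLp f (ENNReal.ofReal p) volume) :
    eLpNorm (fun x : Heis n₁ × Heis n₂ =>
        ∫ t in Icc (0:ℝ) 1 ×ˢ Icc (0:ℝ) 1, f (hdil t.1 x.1, hdil t.2 x.2) * φ t)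
        (ENNReal.ofReal p) volume ≤
      ENNReal.ofReal (∫ t in Icc (0:ℝ) 1 ×ˢ Icc (0:ℝ) 1,
          t.1 ^ (-((2 * n₁ + 2 : ℝ) / p)) * t.2 ^ (-((2 * n₂ + 2 : ℝ) / p)) * φ t) *
        eLpNorm f (ENNReal.ofReal p) volume := by
  set S := Icc (0:ℝ) 1 ×ˢ Icc (0:ℝ) 1
  have hp0 : 0 < p := zero_lt_one.trans_le hp
  have hpos : ∀ᵐ t ∂(volume.restrict S), 0 < t.1 ∧ 0 < t.2 := ae_pos_restrict_unitSquare
  have hF : AEStronglyMeasurable (fun z : (Heis n₁ × Heis n₂) × (ℝ × ℝ) =>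
      f (hdil z.2.1 z.1.1, hdil z.2.2 z.1.2) * φ z.2) (volume.prod (volume.restrict S)) :=
    (hf.1.comp_quasiMeasurePreserving (quasiMeasurePreserving_hdil_prod
      (hpos.mono fun _ ht => ⟨ht.1.ne', ht.2.ne'⟩))).mul
      (hφm.comp measurable_snd).aestronglyMeasurable
  have hw : 0 ≤ᵐ[volume.restrict S] fun t : ℝ × ℝ =>
      t.1 ^ (-((2 * n₁ + 2 : ℝ) / p)) * t.2 ^ (-((2 * n₂ + 2 : ℝ) / p)) * φ t :=
    hpos.mono fun t ⟨h₁, h₂⟩ => by have := hφ0 t; positivity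
  refine (eLpNorm_integral_le (μ := volume) (ν := volume.restrict S)
    (ENNReal.one_le_ofReal.2 hp) ENNReal.ofReal_ne_top hF).trans_eq ?_
  rw [lintegral_congr_ae (hpos.mono fun t ht => eLpNorm_comp_hdil_prod_mul hp0 ht (hφ0 t) hf.1),
    lintegral_mul_const _ (by fun_prop), ofReal_integral_eq_lintegral_ofReal hC hw]
end
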